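/- arXiv:1403.5540 — 8 statements merged into one kernel-verified Lean document; each statement's English description precedes it below -/
import Mathlib

section
/- If (u_1,…,u_r) and (v_1,…,v_s) are two maximal admissible tuples, then the linear span of {u_1,…,u_r} equals the linear span of {v_1,…,v_s}. -/
open MeasureTheory Filter
open scoped RealInnerProductSpace

noncomputable section

/-- The positive orthant `Q` of `ℝ^d`. -/
def Qpos (d : ℕ) : Set (EuclideanSpace ℝ (Fin d)) := {x | ∀ i, 0 ≤ x i}

/-- An `r`-tuple `(u 0, …, u (r-1))` of vectors of the orthant is *admissible* if the vectors
are linearly independent, `μ(u_1^-) = 1`, and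
`μ(u_k^- ∩ u_{k-1}^⊥ ∩ ⋯ ∩ u_1^⊥) = μ(u_{k-1}^⊥ ∩ ⋯ ∩ u_1^⊥)` for `k = 2, …, r`
(the case `k = 1` of the displayed condition reads `μ(u_1^-) = μ(ℝ^d) = 1`). -/
def Admissible {d : ℕ} (μ : Measure (EuclideanSpace ℝ (Fin d))) {r : ℕ}
    (u : Fin r → EuclideanSpace ℝ (Fin d)) : Prop :=
  (∀ k, u k ∈ Qpos d) ∧ LinearIndependent ℝ u ∧
    ∀ k : Fin r,
      μ ({x | ⟪x, u k⟫ ≤ 0} ∩ {x | ∀ j, j < k → ⟪x, u j⟫ = 0}) =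
        μ {x | ∀ j, j < k → ⟪x, u j⟫ = 0}

/-- An admissible tuple is *maximal* if no vector `v ∈ Q` can be appended to it so that the
resulting tuple is still admissible. -/
def MaximalAdmissible {d : ℕ} (μ : Measure (EuclideanSpace ℝ (Fin d))) {r : ℕ}
    (u : Fin r → EuclideanSpace ℝ (Fin d)) : Prop :=
  Admissible μ u ∧ ∀ v ∈ Qpos d, ¬ Admissible μ (Fin.snoc u v)

/-!
Let `u` be admissible and `v` maximal admissible. Inductively every `u k` lies in `span v`: once
`u 0, …, u (k-1)` do, the set `V = {x | ∀ j, ⟪x, v j⟫ = 0}` is contained in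
`U_k = {x | ∀ j < k, ⟪x, u j⟫ = 0}`, and since `⟪x, u k⟫ ≤ 0` holds `μ`-a.e. on `U_k` it holds
`μ`-a.e. on `V`. If `u k` were not in `span v`, it could then be appended to `v`, against
maximality. Exchanging the roles of `u` and `v` gives the other inclusion.
-/

theorem MeasureTheory.measure_inter_eq_of_subset {α : Type*} [MeasurableSpace α] {μ : Measure α}
    [IsFiniteMeasure μ] {A E F : Set α} (hA : MeasurableSet A) (hFE : F ⊆ E)
    (h : μ (A ∩ E) = μ E) : μ (A ∩ F) = μ F := by
  have hE : μ (E \ A) = 0 := by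
    have := measure_inter_add_sdiff (μ := μ) E hA
    rw [Set.inter_comm, h] at this
    exact (ENNReal.add_right_inj (measure_ne_top μ E)).1 (this.trans (add_zero _).symm)
  rw [Set.inter_comm]
  exact measure_inter_conull' (measure_mono_null (Set.sdiff_subset_sdiff_left hFE) hE)

theorem inner_eq_zero_of_mem_span {E : Type*} [NormedAddCommGroup E] [InnerProductSpace ℝ E]
    {ι : Type*} {v : ι → E} {x y : E} (hx : ∀ j, ⟪x, v j⟫ = 0)
    (hy : y ∈ Submodule.span ℝ (Set.range v)) : ⟪x, y⟫ = 0 := by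
  have hle : Submodule.span ℝ (Set.range v) ≤ LinearMap.ker (innerₛₗ ℝ x) :=
    Submodule.span_le.2 (by rintro _ ⟨j, rfl⟩; exact hx j)
  exact hle hy

section

variable {d : ℕ} {μ : Measure (EuclideanSpace ℝ (Fin d))}

theorem Admissible.snoc {s : ℕ} {v : Fin s → EuclideanSpace ℝ (Fin d)}
    {w : EuclideanSpace ℝ (Fin d)} (hv : Admissible μ v) (hwQ : w ∈ Qpos d)
    (hw : w ∉ Submodule.span ℝ (Set.range v))
    (hm : μ ({x | ⟪x, w⟫ ≤ 0} ∩ {x | ∀ j, ⟪x, v j⟫ = 0}) = μ {x | ∀ j, ⟪x, v j⟫ = 0}) :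
    Admissible μ (Fin.snoc v w) := by
  refine ⟨Fin.lastCases ?_ ?_, linearIndependent_finSnoc.2 ⟨hv.2.1, hw⟩, Fin.lastCases ?_ ?_⟩
  · simpa using hwQ
  · intro i
    simpa using hv.1 i
  · simpa [Fin.forall_fin_succ'] using hm
  · intro i
    simpa [Fin.forall_fin_succ', (Fin.castSucc_lt_last i).not_gt] using hv.2.2 i

theorem MaximalAdmissible.mem_span {s : ℕ} {v : Fin s → EuclideanSpace ℝ (Fin d)}
    (hv : MaximalAdmissible μ v) {w : EuclideanSpace ℝ (Fin d)} (hwQ : w ∈ Qpos d)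
    (hm : μ ({x | ⟪x, w⟫ ≤ 0} ∩ {x | ∀ j, ⟪x, v j⟫ = 0}) = μ {x | ∀ j, ⟪x, v j⟫ = 0}) :
    w ∈ Submodule.span ℝ (Set.range v) := by
  by_contra hw
  exact hv.2 w hwQ (hv.1.snoc hwQ hw hm)

theorem Admissible.span_le_of_maximalAdmissible [IsFiniteMeasure μ] {r s : ℕ}
    {u : Fin r → EuclideanSpace ℝ (Fin d)} {v : Fin s → EuclideanSpace ℝ (Fin d)}
    (hu : Admissible μ u) (hv : MaximalAdmissible μ v) :
    Submodule.span ℝ (Set.range u) ≤ Submodule.span ℝ (Set.range v) := by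
  rw [Submodule.span_le]
  rintro _ ⟨k, rfl⟩
  induction k using WellFoundedLT.induction with
  | _ k ih =>
    have hsub : {x | ∀ j, ⟪x, v j⟫ = 0} ⊆ {x | ∀ j, j < k → ⟪x, u j⟫ = 0} :=
      fun x hx j hj => inner_eq_zero_of_mem_span hx (ih j hj)
    have hA : MeasurableSet {x : EuclideanSpace ℝ (Fin d) | ⟪x, u k⟫ ≤ 0} :=
      (isClosed_le (continuous_id.inner continuous_const) continuous_const).measurableSet
    exact hv.mem_span (hu.1 k) (measure_inter_eq_of_subset hA hsub (hu.2.2 k))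

end

theorem stmt2_general (d : ℕ)
    (μ : Measure (EuclideanSpace ℝ (Fin d))) [IsProbabilityMeasure μ]
    {r s : ℕ} (u : Fin r → EuclideanSpace ℝ (Fin d)) (v : Fin s → EuclideanSpace ℝ (Fin d))
    (hu : MaximalAdmissible μ u) (hv : MaximalAdmissible μ v) :
    Submodule.span ℝ (Set.range u) = Submodule.span ℝ (Set.range v) :=
  le_antisymm (hu.1.span_le_of_maximalAdmissible hv) (hv.1.span_le_of_maximalAdmissible hu)

/-- Any two maximal admissible tuples generate the same linear space. -/
theorem stmt2 (d : ℕ) (hd : 1 ≤ d)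
    (μ : Measure (EuclideanSpace ℝ (Fin d))) [IsProbabilityMeasure μ]
    {r s : ℕ} (u : Fin r → EuclideanSpace ℝ (Fin d)) (v : Fin s → EuclideanSpace ℝ (Fin d))
    (hu : MaximalAdmissible μ u) (hv : MaximalAdmissible μ v) :
    Submodule.span ℝ (Set.range u) = Submodule.span ℝ (Set.range v) :=
  stmt2_general d μ u v hu hv
end
end

section
/- The infimum of the Laplace transform over the orthant decomposes along the reduced support: inf_{z∈Q} L_μ(z) = inf_{v ∈ V^+} ∫_V exp(⟨v,y⟩) dμ(y). -/
open MeasureTheory Filter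
open scoped RealInnerProductSpace

noncomputable section

/-- The Laplace transform `L_μ(z) = ∫ exp⟨z,y⟫ dμ(y)`. -/
def laplace {d : ℕ} (μ : Measure (EuclideanSpace ℝ (Fin d)))
    (z : EuclideanSpace ℝ (Fin d)) : ℝ :=
  ∫ y, Real.exp ⟪z, y⟫ ∂μ

/-- The reduced support `V = span{u_1,…,u_r}^⊥` associated with a (maximal admissible) tuple. -/
def Vred {d : ℕ} {r : ℕ} (u : Fin r → EuclideanSpace ℝ (Fin d)) :
    Submodule ℝ (EuclideanSpace ℝ (Fin d)) :=
  (Submodule.span ℝ (Set.range u))ᗮ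

/-- The cone `V^+ = V ∩ ⋃_{h ∈ V^⊥} (Q − h)`. -/
def Vplus {d : ℕ} {r : ℕ} (u : Fin r → EuclideanSpace ℝ (Fin d)) :
    Set (EuclideanSpace ℝ (Fin d)) :=
  {v | v ∈ Vred u ∧ ∃ h ∈ (Vred u)ᗮ, v + h ∈ Qpos d}

/-!
Projecting `z ∈ Q` orthogonally onto `V` gives `v ∈ V⁺` with
`∫_V exp⟨v,y⟩ dμ = ∫_V exp⟨z,y⟩ dμ ≤ L_μ(z)`. Conversely, let `v + h ∈ Q` with `v ∈ V`, `h ∈ V^⊥`.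
Admissibility says that on `u_1^⊥ ∩ ⋯ ∩ u_{k-1}^⊥` the measure `μ` lives in `u_k^-`, so adding
`n • u_k` to the exponent kills the mass off `u_k^⊥` as `n → ∞` (dominated convergence). Doing this
for `k = r, …, 1` produces `w ∈ Q` with `L_μ(v + h + w)` arbitrarily close to
`∫_V exp⟨v + h, y⟩ dμ = ∫_V exp⟨v,y⟩ dμ`.
-/

open Set Topology

theorem csInf_le_csInf_of_forall_exists_le_add {S T : Set ℝ} (hS : BddBelow S)
    (hT : T.Nonempty) (h : ∀ b ∈ T, ∀ ε > 0, ∃ a ∈ S, a ≤ b + ε) : sInf S ≤ sInf T :=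
  le_csInf hT fun b hb => le_of_forall_pos_le_add fun ε hε =>
    let ⟨_, ha, hab⟩ := h b hb ε hε
    (csInf_le hS ha).trans hab

theorem ae_restrict_mem_of_measure_inter_eq {α : Type*} [MeasurableSpace α] {μ : Measure α}
    [IsFiniteMeasure μ] {s t : Set α} (ht : MeasurableSet t) (h : μ (t ∩ s) = μ s) :
    ∀ᵐ x ∂μ.restrict s, x ∈ t := by
  rw [ae_iff, ← compl_ofPred, ofPred_mem_eq, measure_compl ht (measure_ne_top _ _),
    Measure.restrict_apply ht, Measure.restrict_apply_univ, h, tsub_self]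

theorem tendsto_integral_mul_exp_mul_of_ae_nonpos {α : Type*} [MeasurableSpace α]
    {ν : Measure α} {f g : α → ℝ} (hf : Integrable f ν) (hg : Measurable g)
    (hg0 : ∀ᵐ x ∂ν, g x ≤ 0) :
    Tendsto (fun n : ℕ => ∫ x, f x * Real.exp (n * g x) ∂ν) atTop
      (𝓝 (∫ x in {x | g x = 0}, f x ∂ν)) := by
  rw [← integral_indicator (measurableSet_eq_fun hg measurable_const)]
  refine tendsto_integral_of_dominated_convergence (fun x => ‖f x‖)
    (fun n => hf.aestronglyMeasurable.mul (by fun_prop)) hf.norm (fun n => ?_) ?_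
  · filter_upwards [hg0] with x hx
    rw [norm_mul, Real.norm_of_nonneg (Real.exp_pos _).le]
    exact mul_le_of_le_one_right (norm_nonneg _)
      (Real.exp_le_one_iff.2 (mul_nonpos_of_nonneg_of_nonpos n.cast_nonneg hx))
  · filter_upwards [hg0] with x hx
    rcases hx.lt_or_eq with hlt | heq
    · rw [indicator_of_notMem (show x ∉ {x | g x = 0} from hlt.ne), ← mul_zero (f x)]
      exact tendsto_const_nhds.mul (Real.tendsto_exp_atBot.comp
        (tendsto_natCast_atTop_atTop.atTop_mul_const_of_neg hlt))
    · simp [heq]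

theorem setIntegral_exp_inner_add_of_mem_orthogonal {E : Type*} [NormedAddCommGroup E]
    [InnerProductSpace ℝ E] [FiniteDimensional ℝ E] [MeasurableSpace E] [BorelSpace E]
    (μ : Measure E) (K : Submodule ℝ E) (v : E) {h : E} (hh : h ∈ Kᗮ) :
    ∫ y in K, Real.exp ⟪v + h, y⟫ ∂μ = ∫ y in K, Real.exp ⟪v, y⟫ ∂μ :=
  setIntegral_congr_fun K.closed_of_finiteDimensional.measurableSet fun y hy => by
    rw [inner_add_left, K.inner_left_of_mem_orthogonal hy hh, add_zero]

section

variable {d r : ℕ}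

local notation "ℝᵈ" => EuclideanSpace ℝ (Fin d)

theorem zero_mem_Qpos : (0 : ℝᵈ) ∈ Qpos d := fun _ => le_rfl

theorem add_mem_Qpos {x y : ℝᵈ} (hx : x ∈ Qpos d) (hy : y ∈ Qpos d) : x + y ∈ Qpos d :=
  fun i => add_nonneg (hx i) (hy i)

theorem smul_mem_Qpos {c : ℝ} (hc : 0 ≤ c) {x : ℝᵈ} (hx : x ∈ Qpos d) : c • x ∈ Qpos d :=
  fun i => mul_nonneg hc (hx i)

theorem zero_mem_Vplus (u : Fin r → ℝᵈ) : (0 : ℝᵈ) ∈ Vplus u :=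
  ⟨zero_mem _, 0, zero_mem _, by simpa using zero_mem_Qpos⟩

def perpPrefix (u : Fin r → ℝᵈ) (k : ℕ) : Set ℝᵈ :=
  {x | ∀ j : Fin r, (j : ℕ) < k → ⟪x, u j⟫ = 0}

theorem measurableSet_perpPrefix (u : Fin r → ℝᵈ) (k : ℕ) : MeasurableSet (perpPrefix u k) := by
  simp only [perpPrefix, ofPred_forall]
  exact .iInter fun j => .iInter fun _ => measurableSet_eq_fun (by fun_prop) measurable_const

theorem perpPrefix_zero (u : Fin r → ℝᵈ) : perpPrefix u 0 = univ := by
  simp [perpPrefix]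

theorem perpPrefix_succ (u : Fin r → ℝᵈ) {k : ℕ} (hk : k < r) :
    perpPrefix u (k + 1) = {x | ⟪x, u ⟨k, hk⟩⟫ = 0} ∩ perpPrefix u k := by
  ext x
  have hval (j : Fin r) : (j : ℕ) = k ↔ j = ⟨k, hk⟩ := (Fin.ext_iff (b := ⟨k, hk⟩)).symm
  simp only [perpPrefix, mem_inter_iff, mem_ofPred_eq, Nat.lt_succ_iff_lt_or_eq, or_imp,
    forall_and, hval, forall_eq, and_comm]

theorem perpPrefix_self (u : Fin r → ℝᵈ) : perpPrefix u r = Vred u := by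
  ext x
  rw [Vred, SetLike.mem_coe, ← Submodule.span_singleton_le_iff_mem, ← Submodule.isOrtho_iff_le,
    Submodule.isOrtho_span]
  simp [perpPrefix]

theorem ae_restrict_perpPrefix_inner_nonpos (μ : Measure ℝᵈ) [IsFiniteMeasure μ]
    {u : Fin r → ℝᵈ} (hu : Admissible μ u) (k : Fin r) :
    ∀ᵐ y ∂μ.restrict (perpPrefix u k), ⟪y, u k⟫ ≤ 0 :=
  ae_restrict_mem_of_measure_inter_eq (t := {y | ⟪y, u k⟫ ≤ 0})
    (measurableSet_le (by fun_prop) measurable_const)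
    -- `perpPrefix u k` is the set of `Admissible` once `<` on `Fin r` is unfolded to values
    (hu.2.2 k)

theorem tendsto_setIntegral_perpPrefix_exp_inner_add_smul (μ : Measure ℝᵈ) [IsFiniteMeasure μ]
    (hexp : ∀ z : ℝᵈ, Integrable (fun y => Real.exp ⟪z, y⟫) μ) {u : Fin r → ℝᵈ}
    (hu : Admissible μ u) {k : ℕ} (hk : k < r) (c : ℝᵈ) :
    Tendsto (fun n : ℕ => ∫ y in perpPrefix u k, Real.exp ⟪c + (n : ℝ) • u ⟨k, hk⟩, y⟫ ∂μ)
      atTop (𝓝 (∫ y in perpPrefix u (k + 1), Real.exp ⟪c, y⟫ ∂μ)) := by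
  have hg : Measurable fun y : ℝᵈ => ⟪y, u ⟨k, hk⟩⟫ := by fun_prop
  have hlim := tendsto_integral_mul_exp_mul_of_ae_nonpos (hexp c).restrict hg
    (ae_restrict_perpPrefix_inner_nonpos μ hu ⟨k, hk⟩)
  rw [Measure.restrict_restrict (measurableSet_eq_fun hg measurable_const), ← perpPrefix_succ]
    at hlim
  simpa only [inner_add_left, real_inner_comm, real_inner_smul_right, Real.exp_add] using hlim

theorem exists_integral_exp_inner_le_setIntegral_perpPrefix (μ : Measure ℝᵈ) [IsFiniteMeasure μ]
    (hexp : ∀ z : ℝᵈ, Integrable (fun y => Real.exp ⟪z, y⟫) μ) {u : Fin r → ℝᵈ}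
    (hu : Admissible μ u) {k : ℕ} (hk : k ≤ r) (b : ℝᵈ) {ε : ℝ} (hε : 0 < ε) :
    ∃ w ∈ Qpos d, ∫ y, Real.exp ⟪b + w, y⟫ ∂μ ≤ ∫ y in perpPrefix u k, Real.exp ⟪b, y⟫ ∂μ + ε := by
  induction k generalizing b ε with
  | zero => exact ⟨0, zero_mem_Qpos, by simp [perpPrefix_zero, hε.le]⟩
  | succ k ih =>
    have hk' : k < r := hk
    obtain ⟨n, hn⟩ := ((tendsto_setIntegral_perpPrefix_exp_inner_add_smul μ hexp hu hk' b
      ).eventually (eventually_le_nhds (lt_add_of_pos_right _ (half_pos hε)))).exists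
    obtain ⟨w, hw, hle⟩ := ih hk'.le (b + (n : ℝ) • u ⟨k, hk'⟩) (half_pos hε)
    refine ⟨(n : ℝ) • u ⟨k, hk'⟩ + w, add_mem_Qpos (smul_mem_Qpos n.cast_nonneg (hu.1 _)) hw, ?_⟩
    rw [← add_assoc]
    linarith

theorem exists_mem_Vplus_setIntegral_le_laplace (μ : Measure ℝᵈ) {z : ℝᵈ}
    (hz_int : Integrable (fun y => Real.exp ⟪z, y⟫) μ) (u : Fin r → ℝᵈ) (hz : z ∈ Qpos d) :
    ∃ v ∈ Vplus u, ∫ y in Vred u, Real.exp ⟪v, y⟫ ∂μ ≤ laplace μ z := by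
  obtain ⟨v, hv, h, hh, rfl⟩ := (Vred u).exists_add_mem_mem_orthogonal z
  refine ⟨v, ⟨hv, h, hh, hz⟩, ?_⟩
  rw [← setIntegral_exp_inner_add_of_mem_orthogonal μ _ v hh]
  exact setIntegral_le_integral hz_int (.of_forall fun y => (Real.exp_pos _).le)

theorem exists_laplace_le_setIntegral_add (μ : Measure ℝᵈ) [IsFiniteMeasure μ]
    (hexp : ∀ z : ℝᵈ, Integrable (fun y => Real.exp ⟪z, y⟫) μ) {u : Fin r → ℝᵈ}
    (hu : Admissible μ u) {v : ℝᵈ} (hv : v ∈ Vplus u) {ε : ℝ} (hε : 0 < ε) :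
    ∃ z ∈ Qpos d, laplace μ z ≤ ∫ y in Vred u, Real.exp ⟪v, y⟫ ∂μ + ε := by
  obtain ⟨-, h, hh, hvh⟩ := hv
  obtain ⟨w, hw, hle⟩ := exists_integral_exp_inner_le_setIntegral_perpPrefix μ hexp hu le_rfl
    (v + h) hε
  rw [perpPrefix_self, setIntegral_exp_inner_add_of_mem_orthogonal μ _ v hh] at hle
  exact ⟨v + h + w, add_mem_Qpos hvh hw, hle⟩

end

theorem stmt3_general (d : ℕ)
    (μ : Measure (EuclideanSpace ℝ (Fin d))) [IsProbabilityMeasure μ]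
    (hexp : ∀ z : EuclideanSpace ℝ (Fin d), Integrable (fun y => Real.exp ⟪z, y⟫) μ)
    {r : ℕ} (u : Fin r → EuclideanSpace ℝ (Fin d))
    (hu : MaximalAdmissible μ u) :
    sInf (laplace μ '' Qpos d) =
      sInf ((fun v => ∫ y in (Vred u : Set (EuclideanSpace ℝ (Fin d))), Real.exp ⟪v, y⟫ ∂μ) ''
        Vplus u) := by
  have exp_inner_nonneg (z y : EuclideanSpace ℝ (Fin d)) : 0 ≤ Real.exp ⟪z, y⟫ :=
    (Real.exp_pos _).le
  refine le_antisymm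
    (csInf_le_csInf_of_forall_exists_le_add
      ⟨0, forall_mem_image.2 fun z _ => integral_nonneg (exp_inner_nonneg z)⟩
      ((nonempty_of_mem (zero_mem_Vplus u)).image _) ?_)
    (csInf_le_csInf_of_forall_exists_le_add
      ⟨0, forall_mem_image.2 fun v _ => integral_nonneg (exp_inner_nonneg v)⟩
      ((nonempty_of_mem zero_mem_Qpos).image _) ?_)
  · rintro _ ⟨v, hv, rfl⟩ ε hε
    obtain ⟨z, hz, hle⟩ := exists_laplace_le_setIntegral_add μ hexp hu.1 hv hε
    exact ⟨_, mem_image_of_mem _ hz, hle⟩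
  · rintro _ ⟨z, hz, rfl⟩ ε hε
    obtain ⟨v, hv, hle⟩ := exists_mem_Vplus_setIntegral_le_laplace μ (hexp z) u hz
    exact ⟨_, mem_image_of_mem _ hv, by linarith⟩

/-- `inf_{z∈Q} L_μ(z) = inf_{v ∈ V^+} ∫_V exp⟨v,y⟫ dμ(y)`. -/
theorem stmt3 (d : ℕ) (hd : 1 ≤ d)
    (μ : Measure (EuclideanSpace ℝ (Fin d))) [IsProbabilityMeasure μ]
    (hexp : ∀ z : EuclideanSpace ℝ (Fin d), Integrable (fun y => Real.exp ⟪z, y⟫) μ)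
    {r : ℕ} (hr : 1 ≤ r) (u : Fin r → EuclideanSpace ℝ (Fin d))
    (hu : MaximalAdmissible μ u) :
    sInf (laplace μ '' Qpos d) =
      sInf ((fun v => ∫ y in (Vred u : Set (EuclideanSpace ℝ (Fin d))), Real.exp ⟪v, y⟫ ∂μ) ''
        Vplus u) :=
  stmt3_general d μ hexp u hu
end
end

section
/- The cone V^+ = V ∩ ⋃_{h ∈ V^⊥} (Q − h) admits the description V^+ = {x ∈ V : ⟨x, e_i⟩ ≥ 0 for all i ∈ I}, where I = {i ∈ {1,…,d} : e_i ∈ V}. -/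
open MeasureTheory Filter
open scoped RealInnerProductSpace

noncomputable section

/-!
An `h ∈ V^⊥` is orthogonal to every `e_i ∈ V`, so `x + h ∈ Q` forces `x_i ≥ 0` for those `i`.
Conversely, `s = ∑ u_k` lies in `V^⊥ ∩ Q`, and `s_i = 0` forces every `u_k` to vanish at `i`, that
is `e_i ∈ V`; hence for `x ∈ V` with `x_i ≥ 0` whenever `e_i ∈ V`, the vector `x + t s` lies in `Q`
for `t` large.
-/

section

variable {d : ℕ}

open EuclideanSpace

theorem inner_single_one_right (x : EuclideanSpace ℝ (Fin d)) (i : Fin d) :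
    ⟪x, single i (1 : ℝ)⟫ = x i := by
  simp [inner_single_right]

theorem nonneg_of_add_mem_Qpos {V : Submodule ℝ (EuclideanSpace ℝ (Fin d))}
    {x h : EuclideanSpace ℝ (Fin d)} (hh : h ∈ Vᗮ) (hxh : x + h ∈ Qpos d) {i : Fin d}
    (hi : single i (1 : ℝ) ∈ V) : 0 ≤ x i := by
  have hhi : h i = 0 := by
    rw [← inner_single_one_right, real_inner_comm]
    exact Submodule.inner_right_of_mem_orthogonal hi hh
  simpa [hhi] using hxh i

theorem sum_mem_Qpos {ι : Type*} [Fintype ι] {u : ι → EuclideanSpace ℝ (Fin d)}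
    (hu : ∀ k, u k ∈ Qpos d) : ∑ k, u k ∈ Qpos d := fun i => by
  simpa using Finset.sum_nonneg fun k _ => hu k i

theorem single_mem_orthogonal_span_of_sum_apply_eq_zero {ι : Type*} [Fintype ι]
    {u : ι → EuclideanSpace ℝ (Fin d)} (hu : ∀ k, u k ∈ Qpos d) {i : Fin d}
    (hi : (∑ k, u k) i = 0) : single i (1 : ℝ) ∈ (Submodule.span ℝ (Set.range u))ᗮ := by
  have hui : ∀ k, u k i = 0 := by
    simp only [WithLp.ofLp_sum, Finset.sum_apply] at hi
    exact fun k =>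
      (Finset.sum_eq_zero_iff_of_nonneg fun k _ => hu k i).mp hi k (Finset.mem_univ k)
  have hortho : Submodule.span ℝ {single i (1 : ℝ)} ⟂ Submodule.span ℝ (Set.range u) := by
    rw [Submodule.isOrtho_span]
    rintro _ rfl _ ⟨k, rfl⟩
    rw [real_inner_comm, inner_single_one_right, hui]
  exact hortho.le (Submodule.mem_span_singleton_self _)

theorem exists_add_smul_mem_Qpos {x s : EuclideanSpace ℝ (Fin d)} (hs : s ∈ Qpos d)
    (hx : ∀ i, s i = 0 → 0 ≤ x i) : ∃ t : ℝ, x + t • s ∈ Qpos d := by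
  have hlarge : ∀ᶠ t : ℝ in atTop, ∀ i, 0 ≤ x i + t * s i := by
    refine eventually_all.mpr fun i => ?_
    rcases (hs i).eq_or_lt with hsi | hsi
    · exact .of_forall fun t => by simpa [← hsi] using hx i hsi.symm
    · exact (tendsto_atTop_add_const_left _ _
        (tendsto_id.atTop_mul_const hsi)).eventually_ge_atTop 0
  obtain ⟨t, ht⟩ := hlarge.exists
  exact ⟨t, fun i => by simpa using ht i⟩

end

theorem stmt6_general (d : ℕ)
    (μ : Measure (EuclideanSpace ℝ (Fin d)))
    {r : ℕ} (u : Fin r → EuclideanSpace ℝ (Fin d))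
    (hu : MaximalAdmissible μ u) :
    Vplus u = {x | x ∈ Vred u ∧
      ∀ i : Fin d, EuclideanSpace.single i (1 : ℝ) ∈ Vred u →
        0 ≤ ⟪x, EuclideanSpace.single i (1 : ℝ)⟫} := by
  have hQ : ∀ k, u k ∈ Qpos d := hu.1.1
  ext x
  simp only [Vplus, Set.mem_ofPred_eq, inner_single_one_right]
  constructor
  · rintro ⟨hxV, h, hh, hxh⟩
    exact ⟨hxV, fun i hi => nonneg_of_add_mem_Qpos hh hxh hi⟩
  · rintro ⟨hxV, hx⟩
    have hspan : ∑ k, u k ∈ Submodule.span ℝ (Set.range u) :=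
      Submodule.sum_mem _ fun k _ => Submodule.subset_span ⟨k, rfl⟩
    obtain ⟨t, ht⟩ := exists_add_smul_mem_Qpos (sum_mem_Qpos hQ) fun i hi =>
      hx i (single_mem_orthogonal_span_of_sum_apply_eq_zero hQ hi)
    exact ⟨hxV, t • ∑ k, u k,
      Submodule.le_orthogonal_orthogonal _ (Submodule.smul_mem _ t hspan), ht⟩

/-- `V^+ = {x ∈ V : ⟨x, e_i⟩ ≥ 0 for all i ∈ I}`, where `I = {i : e_i ∈ V}`. -/
theorem stmt6 (d : ℕ) (hd : 1 ≤ d)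
    (μ : Measure (EuclideanSpace ℝ (Fin d))) [IsProbabilityMeasure μ]
    {r : ℕ} (hr : 1 ≤ r) (u : Fin r → EuclideanSpace ℝ (Fin d))
    (hu : MaximalAdmissible μ u) :
    Vplus u = {x | x ∈ Vred u ∧
      ∀ i : Fin d, EuclideanSpace.single i (1 : ℝ) ∈ Vred u →
        0 ≤ ⟪x, EuclideanSpace.single i (1 : ℝ)⟫} :=
  stmt6_general d μ u hu
end
end

section
/- Assume (H') holds and m ∈ Q×{0}^q. Then (m + F) ∩ int(K) ≠ ∅, where int(K) denotes the interior of K. -/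
/-!
Let `J = {i < p : mᵢ = 0}`. If no `f ∈ F` is positive on `J`, Hahn–Banach separation of `F` from
the open orthant `{x : xᵢ > 0 for i ∈ J}` gives a nonzero `u ≥ 0` supported on `J` with `u ⊥ F`,
i.e. `u ∈ ker Γ`. Then `⟪x - m, u⟫` has zero second moment, so `⟪x, u⟫ = ⟪m, u⟫ = 0` for `μ`-a.e. `x`,
and `μ(u⁻) = 1` contradicts (H'). Given such an `f`, the point `m + ε f` lies in `int K` for small
`ε > 0`: the coordinates `i < p` with `mᵢ > 0` stay positive, and those with `mᵢ = 0` become positive.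
-/

open MeasureTheory Filter
open scoped RealInnerProductSpace

noncomputable section

/-- The shifted cone `K_δ = Q_δ × ℝ^q` in `ℝ^{p+q}` (so `K = K_0`). -/
def Kcone (p q : ℕ) (δ : ℝ) : Set (EuclideanSpace ℝ (Fin (p + q))) :=
  {x | ∀ i : Fin (p + q), (i : ℕ) < p → δ ≤ x i}

/-- The set `Q × {0}^q ⊆ ℝ^{p+q}`. -/
def QZero (p q : ℕ) : Set (EuclideanSpace ℝ (Fin (p + q))) :=
  {x | ∀ i : Fin (p + q), ((i : ℕ) < p → 0 ≤ x i) ∧ (p ≤ (i : ℕ) → x i = 0)}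

/-- `‖x‖_J = (Σ_{j ∈ J} x_j²)^{1/2}` where `J = {j : m_j = 0}`. -/
def normJ {d : ℕ} (m x : EuclideanSpace ℝ (Fin d)) : ℝ :=
  Real.sqrt (∑ j, if m j = 0 then x j ^ 2 else 0)

/-- The covariance matrix `Γ_{ij} = ∫ (y_i − m_i)(y_j − m_j) dμ(y)`. -/
def covMatrix {d : ℕ} (μ : Measure (EuclideanSpace ℝ (Fin d)))
    (m : EuclideanSpace ℝ (Fin d)) : Matrix (Fin d) (Fin d) ℝ :=
  Matrix.of fun i j => ∫ y, (y i - m i) * (y j - m j) ∂μ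

/-- `F = (ker Γ)^⊥`, the orthogonal complement of the kernel of the covariance matrix. -/
def Fsub {d : ℕ} (μ : Measure (EuclideanSpace ℝ (Fin d)))
    (m : EuclideanSpace ℝ (Fin d)) : Submodule ℝ (EuclideanSpace ℝ (Fin d)) :=
  (LinearMap.ker (Matrix.toEuclideanLin (covMatrix μ m)))ᗮ

/-- The smoothed support `G = ℝ₊ m + F`. -/
def Gset {d : ℕ} (μ : Measure (EuclideanSpace ℝ (Fin d)))
    (m : EuclideanSpace ℝ (Fin d)) : Set (EuclideanSpace ℝ (Fin d)) :=
  {z | ∃ lam : ℝ, 0 ≤ lam ∧ ∃ f ∈ Fsub μ m, z = lam • m + f}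


lemma nonpos_of_forall_nonneg_add_mul_le {a b c : ℝ} (h : ∀ t, 0 ≤ t → a + t * b ≤ c) :
    b ≤ 0 := by
  by_contra! hb
  have hac : a ≤ c := by simpa using h 0 le_rfl
  have := h ((c - a + 1) / b) (by positivity)
  rw [div_mul_cancel₀ _ hb.ne'] at this
  linarith

lemma eq_zero_of_forall_add_mul_le {a b c : ℝ} (h : ∀ t, a + t * b ≤ c) : b = 0 := by
  refine le_antisymm (nonpos_of_forall_nonneg_add_mul_le fun t _ => h t) ?_
  have := nonpos_of_forall_nonneg_add_mul_le (a := a) (b := -b) (c := c) fun t _ => by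
    simpa using h (-t)
  linarith

section Orthant

variable {ι : Type*}

lemma isOpen_setOf_forall_pos [Fintype ι] (S : Set ι) :
    IsOpen {x : EuclideanSpace ℝ ι | ∀ i ∈ S, 0 < x i} := by
  simp only [Set.ofPred_forall]
  exact isOpen_iInter_of_finite fun i => isOpen_iInter_of_finite fun _ =>
    isOpen_lt continuous_const (by fun_prop)

lemma convex_setOf_forall_pos (S : Set ι) :
    Convex ℝ {x : EuclideanSpace ℝ ι | ∀ i ∈ S, 0 < x i} := by
  simp only [Set.ofPred_forall]
  exact convex_iInter fun i => convex_iInter fun _ =>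
    convex_halfSpace_gt (f := fun x : EuclideanSpace ℝ ι => x i)
      ⟨fun _ _ => rfl, fun _ _ => rfl⟩ 0

lemma map_eq_zero_of_forall_le {E : Type*} [AddCommGroup E] [Module ℝ E] (φ : E →ₗ[ℝ] ℝ)
    (F : Submodule ℝ E) {s : ℝ} (h : ∀ x ∈ F, s ≤ φ x) {x : E} (hx : x ∈ F) : φ x = 0 := by
  have := eq_zero_of_forall_add_mul_le (a := 0) (b := -φ x) (c := -s) fun t => by
    simpa using h (t • x) (F.smul_mem t hx)
  linarith

lemma exists_nonneg_mem_orthogonal_of_forall_exists_nonpos [Fintype ι]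
    (F : Submodule ℝ (EuclideanSpace ℝ ι)) (S : Set ι) (h : ∀ f ∈ F, ∃ i ∈ S, f i ≤ 0) :
    ∃ u ∈ Fᗮ, u ≠ 0 ∧ (∀ i, 0 ≤ u i) ∧ ∀ i ∉ S, u i = 0 := by
  classical
  have hdisj : Disjoint {x : EuclideanSpace ℝ ι | ∀ i ∈ S, 0 < x i} F :=
    Set.disjoint_left.2 fun x hxC hxF => by
      obtain ⟨i, hi, hxi⟩ := h x hxF
      exact (hxC i hi).not_ge hxi
  obtain ⟨φ, s, hφC, hφF⟩ := geometric_hahn_banach_open (convex_setOf_forall_pos S)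
    (isOpen_setOf_forall_pos S) F.convex hdisj
  set v := (InnerProductSpace.toDual ℝ (EuclideanSpace ℝ ι)).symm φ
  have hv : ∀ x, ⟪v, x⟫ = φ x := fun x => InnerProductSpace.toDual_symm_apply
  have hvi : ∀ i, φ (EuclideanSpace.single i 1) = v i := fun i => by
    simp [← hv, EuclideanSpace.inner_single_right]
  set one : EuclideanSpace ℝ ι := WithLp.toLp 2 fun _ => 1
  have hline : ∀ i t, (i ∈ S → 0 ≤ t) → φ one + t * v i ≤ s := fun i t ht => by
    refine le_of_lt ?_
    rw [← hvi, ← smul_eq_mul, ← map_smul, ← map_add]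
    refine hφC _ fun j hj => ?_
    by_cases hji : j = i
    · subst hji
      simp only [one, PiLp.add_apply, PiLp.smul_apply, PiLp.single_eq_same, smul_eq_mul, mul_one]
      linarith [ht hj]
    · simp [one, hji]
  refine ⟨-v, ?_, ?_, fun i => ?_, fun i hi => ?_⟩
  · rw [Submodule.mem_orthogonal]
    intro w hw
    rw [inner_neg_right, real_inner_comm, hv, neg_eq_zero]
    exact map_eq_zero_of_forall_le (φ : EuclideanSpace ℝ ι →ₗ[ℝ] ℝ) F hφF hw
  · rw [neg_ne_zero]
    rintro hv0
    have h1 := hφC one fun _ _ => by simp [one]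
    rw [← hv, hv0, inner_zero_left] at h1
    linarith [hφF 0 F.zero_mem, map_zero φ]
  · by_cases hi : i ∈ S
    · simpa using nonpos_of_forall_nonneg_add_mul_le fun t ht => hline i t fun _ => ht
    · simp [eq_zero_of_forall_add_mul_le fun t => hline i t fun h => absurd h hi]
  · simp [eq_zero_of_forall_add_mul_le fun t => hline i t fun h => absurd h hi]

end Orthant

section Covariance

open Matrix

variable {d : ℕ} {μ : Measure (EuclideanSpace ℝ (Fin d))}

lemma memLp_inner_sub_left [IsFiniteMeasure μ] (hsq : Integrable (fun y => ‖y‖ ^ 2) μ)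
    (m u : EuclideanSpace ℝ (Fin d)) : MemLp (fun y => ⟪y - m, u⟫) 2 μ :=
  (((memLp_two_iff_integrable_sq_norm aestronglyMeasurable_id).2 hsq).sub
    (memLp_const m)).inner_const u

lemma integral_inner_sub_sq [IsFiniteMeasure μ] (hsq : Integrable (fun y => ‖y‖ ^ 2) μ)
    (m u : EuclideanSpace ℝ (Fin d)) :
    ∫ y, ⟪y - m, u⟫ ^ 2 ∂μ = u.ofLp ⬝ᵥ (covMatrix μ m *ᵥ u.ofLp) := by
  have hcoord : ∀ y i, y i - m i = ⟪y - m, EuclideanSpace.single i 1⟫ := fun y i => by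
    simp [EuclideanSpace.inner_single_right]
  have hprod : ∀ i j, Integrable (fun y => (y i - m i) * (y j - m j)) μ := fun i j => by
    simp only [hcoord]
    exact (memLp_inner_sub_left hsq m _).integrable_mul (memLp_inner_sub_left hsq m _)
  have hexpand : ∀ y, ⟪y - m, u⟫ ^ 2 = ∑ i, ∑ j, u i * u j * ((y i - m i) * (y j - m j)) := by
    intro y
    rw [real_inner_comm, EuclideanSpace.inner_eq_star_dotProduct, sq, dotProduct,
      Finset.sum_mul_sum]
    simp only [PiLp.sub_apply, Pi.star_apply, star_trivial]
    exact Finset.sum_congr rfl fun i _ => Finset.sum_congr rfl fun j _ => by ring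
  rw [integral_congr_ae (ae_of_all _ hexpand), integral_finsetSum _ fun i _ =>
    integrable_finsetSum _ fun j _ => (hprod i j).const_mul _]
  simp only [dotProduct, mulVec, Finset.mul_sum]
  refine Finset.sum_congr rfl fun i _ => ?_
  rw [integral_finsetSum _ fun j _ => (hprod i j).const_mul _]
  refine Finset.sum_congr rfl fun j _ => ?_
  rw [integral_const_mul, covMatrix, of_apply]
  ring

lemma ae_inner_sub_eq_zero_of_mem_ker [IsFiniteMeasure μ]
    (hsq : Integrable (fun y => ‖y‖ ^ 2) μ)
    {m u : EuclideanSpace ℝ (Fin d)} (hu : u ∈ LinearMap.ker (toEuclideanLin (covMatrix μ m))) :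
    ∀ᵐ y ∂μ, ⟪y - m, u⟫ = 0 := by
  have hΓu : covMatrix μ m *ᵥ u.ofLp = 0 := by
    simpa [toLpLin_apply] using hu
  have h0 : ∫ y, ⟪y - m, u⟫ ^ 2 ∂μ = 0 := by
    rw [integral_inner_sub_sq hsq, hΓu, dotProduct_zero]
  filter_upwards [(integral_eq_zero_iff_of_nonneg (fun y => sq_nonneg _)
    (memLp_inner_sub_left hsq m u).integrable_sq).1 h0] with y hy
  exact pow_eq_zero_iff two_ne_zero |>.1 hy

lemma measure_setOf_inner_nonpos_eq_one [IsProbabilityMeasure μ]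
    (hsq : Integrable (fun y => ‖y‖ ^ 2) μ) {m u : EuclideanSpace ℝ (Fin d)}
    (hu : u ∈ LinearMap.ker (toEuclideanLin (covMatrix μ m))) (hmu : ⟪m, u⟫ = 0) :
    μ {x | ⟪x, u⟫ ≤ 0} = 1 := by
  rw [← measure_univ (μ := μ), ← ae_iff_measure_eq
    (measurableSet_le (by fun_prop) measurable_const).nullMeasurableSet]
  filter_upwards [ae_inner_sub_eq_zero_of_mem_ker hsq hu] with y hy
  rw [inner_sub_left, hmu] at hy
  linarith

end Covariance

open Topology in
lemma exists_pos_forall_pos_add_smul {ι : Type*} [Fintype ι] (S : Set ι)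
    {x f : EuclideanSpace ℝ ι} (hx : ∀ i ∈ S, 0 ≤ x i) (hf : ∀ i ∈ S, x i = 0 → 0 < f i) :
    ∃ ε > (0 : ℝ), ∀ i ∈ S, 0 < (x + ε • f) i := by
  have hev : ∀ᶠ ε in 𝓝[>] (0 : ℝ), ∀ i ∈ S, 0 < x i + ε * f i := by
    refine (eventually_all_finite S.toFinite).2 fun i hi => ?_
    rcases (hx i hi).eq_or_lt with hxi | hxi
    · filter_upwards [self_mem_nhdsWithin] with ε hε
      rw [← hxi, zero_add]
      exact mul_pos hε (hf i hi hxi.symm)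
    · have hc : Tendsto (fun ε : ℝ => x i + ε * f i) (𝓝 0) (𝓝 (x i)) := by
        simpa using (show Continuous fun ε : ℝ => x i + ε * f i by fun_prop).tendsto 0
      exact nhdsWithin_le_nhds (hc.eventually_const_lt hxi)
  obtain ⟨ε, hε, hεpos⟩ := (hev.and self_mem_nhdsWithin).exists
  exact ⟨ε, hεpos, hε⟩

theorem stmt11_general (p q : ℕ)
    (μ : Measure (EuclideanSpace ℝ (Fin (p + q)))) [IsProbabilityMeasure μ]
    (m : EuclideanSpace ℝ (Fin (p + q)))
    (hsq : Integrable (fun y => ‖y‖ ^ 2) μ)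
    (hm : m ∈ QZero p q)
    (hH : ∀ u ∈ QZero p q, u ≠ 0 → μ {x | ⟪x, u⟫ ≤ 0} ≠ 1) :
    ({z | ∃ f ∈ Fsub μ m, z = m + f} ∩ interior (Kcone p q 0)).Nonempty := by
  set S : Set (Fin (p + q)) := {i | (i : ℕ) < p ∧ m i = 0}
  obtain ⟨f, hfF, hf⟩ : ∃ f ∈ Fsub μ m, ∀ i ∈ S, 0 < f i := by
    by_contra! h
    obtain ⟨u, huF, hu0, hu_nonneg, hu_supp⟩ :=
      exists_nonneg_mem_orthogonal_of_forall_exists_nonpos _ _ h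
    rw [Fsub, Submodule.orthogonal_orthogonal] at huF
    have huQ : u ∈ QZero p q := fun i =>
      ⟨fun _ => hu_nonneg i, fun hi => hu_supp i fun hiS => hi.not_gt hiS.1⟩
    have hmu : ⟪m, u⟫ = 0 := by
      rw [EuclideanSpace.inner_eq_star_dotProduct]
      refine Finset.sum_eq_zero fun i _ => ?_
      by_cases hi : i ∈ S
      · simp [hi.2]
      · simp [hu_supp i hi]
    exact hH u huQ hu0 (measure_setOf_inner_nonpos_eq_one hsq huF hmu)
  obtain ⟨ε, hε, hpos⟩ := exists_pos_forall_pos_add_smul {i : Fin (p + q) | (i : ℕ) < p}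
    (fun i hi => (hm i).1 hi) (fun i hi hmi => hf i ⟨hi, hmi⟩)
  refine ⟨m + ε • f, ⟨ε • f, (Fsub μ m).smul_mem ε hfF, rfl⟩, ?_⟩
  exact interior_maximal (fun x hx i hi => (hx i hi).le) (isOpen_setOf_forall_pos _) hpos

/-- Under (H') and `m ∈ Q×{0}^q`, `(m + F) ∩ int(K) ≠ ∅`. -/
theorem stmt11 (p q : ℕ) (hp : 1 ≤ p)
    (μ : Measure (EuclideanSpace ℝ (Fin (p + q)))) [IsProbabilityMeasure μ]
    (m : EuclideanSpace ℝ (Fin (p + q)))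
    (hint : Integrable (fun y => y) μ) (hmean : ∫ y, y ∂μ = m)
    (hsq : Integrable (fun y => ‖y‖ ^ 2) μ)
    (hm : m ∈ QZero p q)
    (hH : ∀ u ∈ QZero p q, u ≠ 0 → μ {x | ⟪x, u⟫ ≤ 0} ≠ 1) :
    ({z | ∃ f ∈ Fsub μ m, z = m + f} ∩ interior (Kcone p q 0)).Nonempty :=
  stmt11_general p q μ m hsq hm hH
end
end

section
/- For every sequence (x_n) in K ∩ cl(B_J(0,1)) ∩ G there exists a bounded sequence (y_n) in K ∩ cl(B_J(0,1)) ∩ G such that for all n, y_n ≤ x_n coordinatewise and y_n^{(J)} = x_n^{(J)}, where x^{(J)} denotes the orthogonal projection of x onto span{e_j : j ∈ J}. -/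
open MeasureTheory Filter
open scoped RealInnerProductSpace

noncomputable section

/-!
For each `x` take a minorant of minimal norm in `K ∩ G` that agrees with `x` on `J`. If these
were unbounded, normalising a subsequence would give a unit direction `w ≥ 0` with `w_J = 0`
(the `J`-coordinates stay bounded). Since `K ∩ G` is cut out by finitely many linear
inequalities and a closed subspace, subtracting `w` from a far-away minorant leaves a minorant
in `K ∩ G` of strictly smaller norm.
-/

open scoped Topology

/-- Holds for sets cut out by finitely many linear inequalities, but not, e.g., for a round
cone. -/
def AsymptoticDirectionStable {E : Type*} [AddCommGroup E] [Module ℝ E] [TopologicalSpace E]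
    (C : Set E) : Prop :=
  ∀ ⦃y : ℕ → E⦄ ⦃t : ℕ → ℝ⦄ ⦃w : E⦄, (∀ k, y k ∈ C) → Tendsto t atTop atTop →
    Tendsto (fun k => (t k)⁻¹ • y k) atTop (𝓝 w) → ∀ᶠ k in atTop, y k - w ∈ C

namespace AsymptoticDirectionStable

variable {E E' : Type*} [AddCommGroup E] [Module ℝ E] [TopologicalSpace E]
  [AddCommGroup E'] [Module ℝ E'] [TopologicalSpace E']

theorem inter {C D : Set E} (hC : AsymptoticDirectionStable C)
    (hD : AsymptoticDirectionStable D) : AsymptoticDirectionStable (C ∩ D) :=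
  fun _ _ _ hy ht hw => (hC (fun k => (hy k).1) ht hw).and (hD (fun k => (hy k).2) ht hw)

theorem iInter {ι : Type*} [Finite ι] {C : ι → Set E}
    (hC : ∀ i, AsymptoticDirectionStable (C i)) : AsymptoticDirectionStable (⋂ i, C i) := by
  intro y t w hy ht hw
  simp only [Set.mem_iInter] at hy ⊢
  exact eventually_all.2 fun i => hC i (fun k => hy k i) ht hw

theorem preimage {C : Set E'} (hC : AsymptoticDirectionStable C) (A : E →L[ℝ] E') :
    AsymptoticDirectionStable (A ⁻¹' C) := by
  intro y t w hy ht hw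
  have hAw : Tendsto (fun k => (t k)⁻¹ • A (y k)) atTop (𝓝 (A w)) := by
    simpa only [Function.comp_def, map_smul] using (A.continuous.tendsto w).comp hw
  filter_upwards [hC hy ht hAw] with k hk
  simpa only [Set.mem_preimage, map_sub] using hk

end AsymptoticDirectionStable

theorem asymptoticDirectionStable_Ici (a : ℝ) : AsymptoticDirectionStable (Set.Ici a) := by
  intro y t w hy ht hw
  rcases le_or_gt w 0 with hw0 | hw0
  · exact Eventually.of_forall fun k => by simpa using (hy k).out.trans (by linarith)
  have hy_top : Tendsto y atTop atTop := by
    refine (ht.atTop_mul_pos hw0 hw).congr' ?_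
    filter_upwards [ht.eventually_ne_atTop 0] with k hk
    rw [smul_eq_mul, mul_inv_cancel_left₀ hk]
  filter_upwards [hy_top.eventually_ge_atTop (a + w)] with k hk
  simp only [Set.mem_Ici]
  linarith

theorem Submodule.asymptoticDirectionStable {E : Type*} [AddCommGroup E] [Module ℝ E]
    [TopologicalSpace E] (V : Submodule ℝ E) (hV : IsClosed (V : Set E)) :
    AsymptoticDirectionStable (V : Set E) := by
  intro y t w hy ht hw
  have hwV : w ∈ V := hV.mem_of_tendsto hw (Eventually.of_forall fun k => V.smul_mem _ (hy k))
  exact Eventually.of_forall fun k => V.sub_mem (hy k) hwV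

theorem IsClosed.exists_norm_le {E : Type*} [NormedAddCommGroup E] [ProperSpace E] {s : Set E}
    (hs : IsClosed s) (hne : s.Nonempty) : ∃ y ∈ s, ∀ z ∈ s, ‖y‖ ≤ ‖z‖ := by
  obtain ⟨y, hy, hdist⟩ := hs.exists_infDist_eq_dist hne 0
  refine ⟨y, hy, fun z hz => ?_⟩
  simpa only [← dist_zero_left, ← hdist] using Metric.infDist_le_dist_of_mem hz

/-- `‖y - w‖² = ‖y‖² - 2⟪y, w⟫ + ‖w‖²`, and `⟪y k, w⟫ ≈ t k ‖w‖² → ∞`. -/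
theorem eventually_norm_sub_lt_norm_of_tendsto_inv_smul {E : Type*} [NormedAddCommGroup E]
    [InnerProductSpace ℝ E] {α : Type*} {l : Filter α} {y : α → E} {t : α → ℝ} {w : E} (hw : w ≠ 0)
    (ht : Tendsto t l atTop) (hy : Tendsto (fun k => (t k)⁻¹ • y k) l (𝓝 w)) :
    ∀ᶠ k in l, ‖y k - w‖ < ‖y k‖ := by
  have hpos : 0 < ‖w‖ ^ 2 := by positivity
  have hinner : Tendsto (fun k => ⟪y k, w⟫) l atTop := by
    have hlim : Tendsto (fun k => ⟪(t k)⁻¹ • y k, w⟫) l (𝓝 (‖w‖ ^ 2)) := by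
      simpa only [real_inner_self_eq_norm_sq] using
        hy.inner (𝕜 := ℝ) (tendsto_const_nhds (x := w))
    refine (ht.atTop_mul_pos hpos hlim).congr' ?_
    filter_upwards [ht.eventually_ne_atTop 0] with k hk
    rw [real_inner_smul_left, mul_inv_cancel_left₀ hk]
  filter_upwards [hinner.eventually_gt_atTop (‖w‖ ^ 2 / 2)] with k hk
  refine lt_of_pow_lt_pow_left₀ 2 (norm_nonneg _) ?_
  rw [norm_sub_sq_real]
  linarith

section Minorants

variable {ι : Type*}

def minorantsOn (C : Set (EuclideanSpace ℝ ι)) (J : Set ι) (x : EuclideanSpace ℝ ι) :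
    Set (EuclideanSpace ℝ ι) :=
  {y ∈ C | (∀ i, y i ≤ x i) ∧ ∀ j ∈ J, y j = x j}

variable {C : Set (EuclideanSpace ℝ ι)} {J : Set ι}

theorem self_mem_minorantsOn {x : EuclideanSpace ℝ ι} (hx : x ∈ C) : x ∈ minorantsOn C J x :=
  ⟨hx, fun _ => le_rfl, fun _ _ => rfl⟩

theorem isClosed_minorantsOn (hC : IsClosed C) (x : EuclideanSpace ℝ ι) :
    IsClosed (minorantsOn C J x) := by
  have hle : IsClosed (⋂ i, {y : EuclideanSpace ℝ ι | y i ≤ x i}) :=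
    isClosed_iInter fun i => isClosed_le (by fun_prop) continuous_const
  have heq : IsClosed (⋂ j ∈ J, {y : EuclideanSpace ℝ ι | y j = x j}) :=
    isClosed_biInter fun j _ => isClosed_eq (by fun_prop) continuous_const
  convert hC.inter (hle.inter heq) using 1
  ext y
  simp only [minorantsOn, Set.mem_ofPred_eq, Set.mem_inter_iff, Set.mem_iInter]

variable [Fintype ι]

theorem exists_mem_minorantsOn_norm_lt (hstab : AsymptoticDirectionStable C)
    (hnonneg : ∀ y ∈ C, ∀ i ∉ J, 0 ≤ y i) {B : ℝ} {x y : ℕ → EuclideanSpace ℝ ι}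
    (hxJ : ∀ k, ∀ j ∈ J, |x k j| ≤ B) (hy : ∀ k, y k ∈ minorantsOn C J (x k))
    (hnorm : Tendsto (fun k => ‖y k‖) atTop atTop) :
    ∃ k, ∃ z ∈ minorantsOn C J (x k), ‖z‖ < ‖y k‖ := by
  have hball : ∀ k, ‖y k‖⁻¹ • y k ∈ Metric.closedBall (0 : EuclideanSpace ℝ ι) 1 := fun k => by
    rw [mem_closedBall_zero_iff, norm_smul, norm_inv, norm_norm]
    exact inv_mul_le_one_of_le₀ le_rfl (norm_nonneg _)
  obtain ⟨w, -, φ, hφ, hw⟩ := tendsto_subseq_of_bounded Metric.isBounded_closedBall hball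
  set t := fun k => ‖y (φ k)‖
  have ht : Tendsto t atTop atTop := hnorm.comp hφ.tendsto_atTop
  have hw_norm : ‖w‖ = 1 := by
    refine tendsto_nhds_unique hw.norm (tendsto_const_nhds.congr' ?_)
    filter_upwards [ht.eventually_gt_atTop 0] with k hk
    exact (norm_smul_inv_norm (norm_pos_iff.1 hk)).symm
  have hcoord : ∀ i, Tendsto (fun k => (t k)⁻¹ * y (φ k) i) atTop (𝓝 (w i)) := fun i =>
    ((EuclideanSpace.proj i).continuous.tendsto w).comp hw
  have hwJ : ∀ j ∈ J, w j = 0 := by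
    intro j hj
    refine tendsto_nhds_unique (hcoord j) ?_
    have hbdd : ∀ k, |y (φ k) j| ≤ B := fun k => ((hy (φ k)).2.2 j hj).symm ▸ hxJ (φ k) j hj
    exact ht.inv_tendsto_atTop.zero_mul_isBoundedUnder_le
      ⟨B, eventually_map.2 (Eventually.of_forall fun k => by simpa using hbdd k)⟩
  have hw_nonneg : ∀ i, 0 ≤ w i := by
    intro i
    by_cases hi : i ∈ J
    · exact (hwJ i hi).ge
    · exact ge_of_tendsto' (hcoord i) fun k =>
        mul_nonneg (inv_nonneg.2 (norm_nonneg _)) (hnonneg _ (hy (φ k)).1 i hi)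
  have hw0 : w ≠ 0 := by
    rintro rfl
    simp at hw_norm
  obtain ⟨k, hkC, hk_lt⟩ := ((hstab (fun k => (hy (φ k)).1) ht hw).and
    (eventually_norm_sub_lt_norm_of_tendsto_inv_smul hw0 ht hw)).exists
  refine ⟨φ k, y (φ k) - w, ⟨hkC, fun i => ?_, fun j hj => ?_⟩, hk_lt⟩
  · simpa using (sub_le_self _ (hw_nonneg i)).trans ((hy (φ k)).2.1 i)
  · simpa [hwJ j hj] using (hy (φ k)).2.2 j hj

theorem AsymptoticDirectionStable.exists_bounded_minorantsOn (hC : IsClosed C)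
    (hstab : AsymptoticDirectionStable C) (hnonneg : ∀ y ∈ C, ∀ i ∉ J, 0 ≤ y i) (B : ℝ) :
    ∃ R, ∀ x ∈ C, (∀ j ∈ J, |x j| ≤ B) → ∃ y ∈ minorantsOn C J x, ‖y‖ ≤ R := by
  by_contra! h
  choose x hxC hxJ hbig using fun k : ℕ => h k
  choose y hy hymin using fun k =>
    (isClosed_minorantsOn hC (x k)).exists_norm_le ⟨x k, self_mem_minorantsOn (hxC k)⟩
  have hnorm : Tendsto (fun k => ‖y k‖) atTop atTop :=
    tendsto_atTop_mono (fun k => (hbig k (y k) (hy k)).le) tendsto_natCast_atTop_atTop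
  obtain ⟨k, z, hz, hlt⟩ := exists_mem_minorantsOn_norm_lt hstab hnonneg hxJ hy hnorm
  exact (hymin k z hz).not_gt hlt

end Minorants

section RayAdd

variable {E : Type*} [NormedAddCommGroup E] [InnerProductSpace ℝ E]
  (F : Submodule ℝ E) [F.HasOrthogonalProjection] (m : E)

/-- `Gset μ m = rayAdd (Fsub μ m) m` by definition. -/
def rayAdd : Set E := {z | ∃ lam : ℝ, 0 ≤ lam ∧ ∃ f ∈ F, z = lam • m + f}

/-- Reads off `lam` from `lam • m + f` with `f ∈ F` when `m ∉ F`; it is `0` when `m ∈ F`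
(then `m - F.starProjection m = 0`). -/
def rayCoord : E →L[ℝ] ℝ :=
  (‖m - F.starProjection m‖ ^ 2)⁻¹ • innerSL ℝ (m - F.starProjection m)

theorem rayCoord_smul_add (hm : m ∉ F) (lam : ℝ) {f : E} (hf : f ∈ F) :
    rayCoord F m (lam • m + f) = lam := by
  set u := m - F.starProjection m
  have hu : u ∈ Fᗮ := F.sub_starProjection_mem_orthogonal m
  have hu0 : u ≠ 0 := sub_ne_zero.2 fun h => hm (F.starProjection_eq_self_iff.1 h.symm)
  have huf : ⟪u, f⟫ = 0 := (F.mem_orthogonal' u).1 hu f hf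
  have hum : ⟪u, m⟫ = ‖u‖ ^ 2 := by
    have hproj : ⟪u, F.starProjection m⟫ = 0 :=
      (F.mem_orthogonal' u).1 hu _ (F.starProjection_apply_mem m)
    rw [← real_inner_self_eq_norm_sq, inner_sub_right, hproj, sub_zero]
  have hnorm : ‖u‖ ≠ 0 := norm_ne_zero_iff.2 hu0
  show (‖u‖ ^ 2)⁻¹ * ⟪u, lam • m + f⟫ = lam
  rw [inner_add_right, real_inner_smul_right, huf, hum, add_zero]
  field_simp

theorem rayAdd_eq_preimage :
    rayAdd F m = rayCoord F m ⁻¹' Set.Ici 0 ∩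
      (ContinuousLinearMap.id ℝ E - (rayCoord F m).smulRight m) ⁻¹' F := by
  ext z
  simp only [rayAdd, Set.mem_ofPred_eq, FunLike.coe_sub, ContinuousLinearMap.coe_id',
    Set.mem_inter_iff, Set.mem_preimage, Set.mem_Ici, Pi.sub_apply, id_eq,
    ContinuousLinearMap.smulRight_apply, SetLike.mem_coe]
  by_cases hm : m ∈ F
  · have hcoord : rayCoord F m z = 0 := by simp [rayCoord, F.starProjection_eq_self_iff.2 hm]
    rw [hcoord, zero_smul, sub_zero]
    constructor
    · rintro ⟨lam, -, f, hf, rfl⟩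
      exact ⟨le_rfl, F.add_mem (F.smul_mem lam hm) hf⟩
    · exact fun ⟨_, hz⟩ => ⟨0, le_rfl, z, hz, by simp⟩
  · constructor
    · rintro ⟨lam, hlam, f, hf, rfl⟩
      rw [rayCoord_smul_add F m hm lam hf]
      simpa using ⟨hlam, hf⟩
    · rintro ⟨hlam, hf⟩
      exact ⟨_, hlam, _, hf, (add_sub_cancel _ _).symm⟩

theorem Submodule.isClosed_of_hasOrthogonalProjection : IsClosed (F : Set E) :=
  F.orthogonal_orthogonal ▸ Fᗮ.isClosed_orthogonal

theorem isClosed_rayAdd : IsClosed (rayAdd F m) := by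
  rw [rayAdd_eq_preimage]
  exact (isClosed_Ici.preimage (rayCoord F m).continuous).inter
    (F.isClosed_of_hasOrthogonalProjection.preimage (ContinuousLinearMap.continuous _))

theorem asymptoticDirectionStable_rayAdd : AsymptoticDirectionStable (rayAdd F m) := by
  rw [rayAdd_eq_preimage]
  exact ((asymptoticDirectionStable_Ici 0).preimage _).inter
    ((F.asymptoticDirectionStable F.isClosed_of_hasOrthogonalProjection).preimage _)

end RayAdd

theorem Kcone_eq_iInter (p q : ℕ) (δ : ℝ) :
    Kcone p q δ = ⋂ i : {i : Fin (p + q) // (i : ℕ) < p},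
      EuclideanSpace.proj (𝕜 := ℝ) (i : Fin (p + q)) ⁻¹' Set.Ici δ := by
  ext x
  simp [Kcone]

theorem isClosed_Kcone (p q : ℕ) (δ : ℝ) : IsClosed (Kcone p q δ) := by
  rw [Kcone_eq_iInter]
  exact isClosed_iInter fun i => isClosed_Ici.preimage (ContinuousLinearMap.continuous _)

theorem asymptoticDirectionStable_Kcone (p q : ℕ) (δ : ℝ) :
    AsymptoticDirectionStable (Kcone p q δ) := by
  rw [Kcone_eq_iInter]
  exact .iInter fun i => (asymptoticDirectionStable_Ici δ).preimage _

section NormJ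

variable {d : ℕ} (m : EuclideanSpace ℝ (Fin d))

theorem abs_le_normJ {j : Fin d} (hj : m j = 0) (x : EuclideanSpace ℝ (Fin d)) :
    |x j| ≤ normJ m x := by
  refine Real.abs_le_sqrt ?_
  have := Finset.single_le_sum (f := fun j => if m j = 0 then x j ^ 2 else 0)
    (fun j _ => by positivity) (Finset.mem_univ j)
  simpa [hj] using this

theorem continuous_normJ : Continuous (normJ m) := by
  refine Real.continuous_sqrt.comp (continuous_finsetSum _ fun j _ => ?_)
  split_ifs
  · fun_prop
  · exact continuous_const

theorem normJ_add_of_eq_zero {v : EuclideanSpace ℝ (Fin d)} (hv : ∀ j, m j = 0 → v j = 0)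
    (x : EuclideanSpace ℝ (Fin d)) : normJ m (x + v) = normJ m x := by
  unfold normJ
  congr 1
  refine Finset.sum_congr rfl fun j _ => ?_
  split_ifs with hj
  · simp [hv j hj]
  · rfl

theorem mem_closure_normJ_lt_of_eq {r : ℝ} {x y : EuclideanSpace ℝ (Fin d)}
    (hx : x ∈ closure {z | normJ m z < r}) (hxy : ∀ j, m j = 0 → y j = x j) :
    y ∈ closure {z | normJ m z < r} := by
  let τ := Homeomorph.addRight (y - x)
  have hτ : τ ⁻¹' {z | normJ m z < r} = {z | normJ m z < r} := by
    ext z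
    simp [τ, normJ_add_of_eq_zero m (v := y - x) fun j hj => by simp [hxy j hj]]
  have hx' : x ∈ τ ⁻¹' closure {z | normJ m z < r} := by
    rwa [τ.preimage_closure, hτ]
  simpa [τ] using hx'

end NormJ

theorem stmt13_general (p q : ℕ)
    (μ : Measure (EuclideanSpace ℝ (Fin (p + q))))
    (m : EuclideanSpace ℝ (Fin (p + q)))
    (hm : m ∈ QZero p q) :
    ∀ x : ℕ → EuclideanSpace ℝ (Fin (p + q)),
      (∀ n, x n ∈ Kcone p q 0 ∩ closure {z | normJ m z < 1} ∩ Gset μ m) →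
      ∃ y : ℕ → EuclideanSpace ℝ (Fin (p + q)),
        (∃ C : ℝ, ∀ n, ‖y n‖ ≤ C) ∧
        ∀ n, y n ∈ Kcone p q 0 ∩ closure {z | normJ m z < 1} ∩ Gset μ m ∧
          (∀ i, y n i ≤ x n i) ∧
          (∀ j, m j = 0 → y n j = x n j) := by
  intro x hx
  have hnonneg : ∀ y ∈ Kcone p q 0 ∩ Gset μ m, ∀ i ∉ {j | m j = 0}, 0 ≤ y i :=
    fun y hy i hi => hy.1 i (not_le.1 fun hpi => hi ((hm i).2 hpi))
  obtain ⟨R, hR⟩ := ((asymptoticDirectionStable_Kcone p q 0).inter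
    (asymptoticDirectionStable_rayAdd (Fsub μ m) m)).exists_bounded_minorantsOn
    ((isClosed_Kcone p q 0).inter (isClosed_rayAdd (Fsub μ m) m)) hnonneg 1
  have hxJ : ∀ n, ∀ j ∈ {j | m j = 0}, |x n j| ≤ 1 := fun n j hj =>
    (abs_le_normJ m hj _).trans (closure_lt_subset_le (continuous_normJ m) continuous_const
      (hx n).1.2)
  choose y hy hyR using fun n => hR (x n) ⟨(hx n).1.1, (hx n).2⟩ (hxJ n)
  refine ⟨y, ⟨R, hyR⟩, fun n => ?_⟩
  obtain ⟨⟨hyK, hyG⟩, hle, hJ⟩ := hy n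
  exact ⟨⟨⟨hyK, mem_closure_normJ_lt_of_eq m (hx n).1.2 hJ⟩, hyG⟩, hle, hJ⟩

/-- For every sequence `(x_n)` in `K ∩ cl(B_J(0,1)) ∩ G` there is a bounded sequence `(y_n)`
in `K ∩ cl(B_J(0,1)) ∩ G` with `y_n ≤ x_n` coordinatewise and `y_n^{(J)} = x_n^{(J)}`. -/
theorem stmt13 (p q : ℕ) (hp : 1 ≤ p)
    (μ : Measure (EuclideanSpace ℝ (Fin (p + q)))) [IsProbabilityMeasure μ]
    (m : EuclideanSpace ℝ (Fin (p + q)))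
    (hint : Integrable (fun y => y) μ) (hmean : ∫ y, y ∂μ = m)
    (hsq : Integrable (fun y => ‖y‖ ^ 2) μ)
    (hm : m ∈ QZero p q) :
    ∀ x : ℕ → EuclideanSpace ℝ (Fin (p + q)),
      (∀ n, x n ∈ Kcone p q 0 ∩ closure {z | normJ m z < 1} ∩ Gset μ m) →
      ∃ y : ℕ → EuclideanSpace ℝ (Fin (p + q)),
        (∃ C : ℝ, ∀ n, ‖y n‖ ≤ C) ∧
        ∀ n, y n ∈ Kcone p q 0 ∩ closure {z | normJ m z < 1} ∩ Gset μ m ∧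
          (∀ i, y n i ≤ x n i) ∧
          (∀ j, m j = 0 → y n j = x n j) :=
  stmt13_general p q μ m hm
end
end

section
/- Let x ∈ P with x ≠ 0. Then x is a minimal point of P if and only if the vectors {C_i : i ∈ I(x)} are positively independent, i.e. the only family of nonnegative reals (u_i)_{i∈I(x)} with Σ_{i∈I(x)} u_i C_i = 0 is u_i = 0 for all i ∈ I(x). -/
noncomputable section

/-- The polyhedron `P = {x ∈ ℝ₊^n : Σ_i x_i C_i = b}`. -/
def PolyP {m n : ℕ} (C : Fin n → Fin m → ℝ) (b : Fin m → ℝ) : Set (Fin n → ℝ) :=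
  {x | (∀ i, 0 ≤ x i) ∧ ∑ i, x i • C i = b}

/-- `x` is a *minimal* point of `P` if `x ∈ P` and no `y ∈ P` satisfies `y < x`
(coordinatewise order). -/
def IsMinimalPt {m n : ℕ} (C : Fin n → Fin m → ℝ) (b : Fin m → ℝ) (x : Fin n → ℝ) : Prop :=
  x ∈ PolyP C b ∧ ¬ ∃ y ∈ PolyP C b, y ≤ x ∧ y ≠ x

/-!
Write `A v = ∑ i, v i • C i`. If `y ∈ P` and `y ≤ x`, then `x - y` is a nonnegative kernel vector
of `A` supported in `I(x)`. Conversely, a nonzero such kernel vector `v` can be subtracted from `x`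
with a small step `t > 0` without leaving the nonnegative orthant, giving a point `x - t • v < x`
of `P`.
-/

open Filter Topology

section

variable {ι M : Type*} [Fintype ι] [AddCommGroup M] [Module ℝ M]

theorem exists_pos_smul_le {x v : ι → ℝ} (hx : 0 ≤ x) (hvx : ∀ i, 0 < v i → 0 < x i) :
    ∃ t : ℝ, 0 < t ∧ t • v ≤ x := by
  have h : ∀ i, ∀ᶠ t in 𝓝[>] (0 : ℝ), t * v i ≤ x i := by
    intro i
    by_cases hxi : 0 < x i
    · have hlim : Tendsto (fun t : ℝ => t * v i) (𝓝 0) (𝓝 0) :=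
        (continuous_mul_const (v i)).tendsto' 0 0 (zero_mul _)
      exact nhdsWithin_le_nhds ((hlim.eventually (gt_mem_nhds hxi)).mono fun _ => le_of_lt)
    · have hvi : v i ≤ 0 := not_lt.mp (mt (hvx i) hxi)
      filter_upwards [self_mem_nhdsWithin] with t (ht : 0 < t)
      exact (mul_nonpos_of_nonneg_of_nonpos ht.le hvi).trans (hx i)
  obtain ⟨t, ht, ht0⟩ := ((eventually_all.2 h).and self_mem_nhdsWithin).exists
  exact ⟨t, ht0, ht⟩

theorem minimal_nonneg_fiber_iff (f : (ι → ℝ) →ₗ[ℝ] M) {x : ι → ℝ} (hx : 0 ≤ x) :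
    Minimal (fun y => 0 ≤ y ∧ f y = f x) x ↔
      ∀ v, 0 ≤ v → (∀ i, 0 < v i → 0 < x i) → f v = 0 → v = 0 := by
  rw [minimal_iff]
  constructor
  · rintro ⟨-, hmin⟩ v hv hvx hfv
    obtain ⟨t, ht, htv⟩ := exists_pos_smul_le hx hvx
    have hxy : x = x - t • v :=
      hmin ⟨sub_nonneg.2 htv, by simp [hfv]⟩ (sub_le_self _ (smul_nonneg ht.le hv))
    exact (smul_eq_zero.1 (sub_eq_self.1 hxy.symm)).resolve_left ht.ne'
  · refine fun h => ⟨⟨hx, rfl⟩, fun y ⟨hy, hfy⟩ hyx => ?_⟩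
    have hv : x - y = 0 :=
      h _ (sub_nonneg.2 hyx) (fun i hi => (sub_pos.1 hi).trans_le' (hy i)) (by simp [hfy])
    exact sub_eq_zero.1 hv

theorem forall_nonneg_sum_smul_eq_zero_iff (C : ι → M) (p : ι → Prop) [DecidablePred p] :
    (∀ u : ι → ℝ, (∀ i, p i → 0 ≤ u i) →
        ∑ i ∈ Finset.univ.filter p, u i • C i = 0 → ∀ i, p i → u i = 0) ↔
      ∀ v : ι → ℝ, 0 ≤ v → (∀ i, 0 < v i → p i) → ∑ i, v i • C i = 0 → v = 0 := by
  constructor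
  · intro h v hv hvp hsum
    have hvp' : ∀ i, ¬ p i → v i = 0 := fun i hi => (hv i).antisymm' (not_lt.1 (mt (hvp i) hi))
    have hsum' : ∑ i ∈ Finset.univ.filter p, v i • C i = 0 := by
      rwa [Finset.sum_filter_of_ne fun i _ hi => not_not.1 (mt (hvp' i) (left_ne_zero_of_smul hi))]
    funext i
    by_cases hi : p i
    · exact h v (fun i _ => hv i) hsum' i hi
    · exact hvp' i hi
  · intro h u hu hsum i hi
    have hv := h ({i | p i}.indicator u) (Set.indicator_nonneg fun i hi => hu i hi)
      (fun i hi => Set.mem_of_indicator_ne_zero hi.ne')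
      (by simpa [Finset.sum_filter, Set.indicator_apply, ite_smul] using hsum)
    simpa [hi] using congrFun hv i

end

theorem isMinimalPt_iff_minimal {m n : ℕ} (C : Fin n → Fin m → ℝ) (b : Fin m → ℝ)
    (x : Fin n → ℝ) :
    IsMinimalPt C b x ↔ Minimal (· ∈ PolyP C b) x := by
  simp only [IsMinimalPt, minimal_iff, not_exists, not_and]
  exact and_congr_right fun _ =>
    forall₂_congr fun _ _ => imp_congr_right fun _ => not_not.trans eq_comm

theorem polyP_eq {m n : ℕ} (C : Fin n → Fin m → ℝ) (b : Fin m → ℝ) :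
    PolyP C b = {y | 0 ≤ y ∧ Fintype.linearCombination ℝ C y = b} := by
  ext y
  simp [PolyP, Fintype.linearCombination_apply, Pi.le_def]

theorem stmt17_general (m n : ℕ)
    (C : Fin n → Fin m → ℝ) (b : Fin m → ℝ)
    (x : Fin n → ℝ) (hx : x ∈ PolyP C b) :
    IsMinimalPt C b x ↔
      ∀ u : Fin n → ℝ, (∀ i, 0 < x i → 0 ≤ u i) →
        ∑ i ∈ Finset.univ.filter (fun i => 0 < x i), u i • C i = 0 →
        ∀ i, 0 < x i → u i = 0 := by
  rw [polyP_eq] at hx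
  obtain ⟨hx_nonneg, rfl⟩ := hx
  rw [isMinimalPt_iff_minimal, polyP_eq, forall_nonneg_sum_smul_eq_zero_iff]
  simpa [Fintype.linearCombination_apply] using
    minimal_nonneg_fiber_iff (Fintype.linearCombination ℝ C) hx_nonneg

/-- A nonzero `x ∈ P` is minimal iff the vectors `{C_i : i ∈ I(x)}`, `I(x) = {i : x_i > 0}`,
are positively independent. -/
theorem stmt17 (m n : ℕ) (hm : 1 ≤ m) (hmn : m ≤ n)
    (C : Fin n → Fin m → ℝ) (b : Fin m → ℝ) (hP : (PolyP C b).Nonempty)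
    (x : Fin n → ℝ) (hx : x ∈ PolyP C b) (hx0 : x ≠ 0) :
    IsMinimalPt C b x ↔
      ∀ u : Fin n → ℝ, (∀ i, 0 < x i → 0 ≤ u i) →
        ∑ i ∈ Finset.univ.filter (fun i => 0 < x i), u i • C i = 0 →
        ∀ i, 0 < x i → u i = 0 :=
  stmt17_general m n C b x hx
end
end

section
/- Assume P ≠ ∅. Then: (1) for every x ∈ P there exists a minimal point y of P with y ≤ x; (2) every minimal point of P is a convex combination of extreme points of P; (3) there exists a constant M, depending only on C_1,…,C_n (and not on b), such that for every b ∈ ℝ^m with P ≠ ∅, every minimal point y of P satisfies ‖y‖_1 ≤ M ‖b‖_1, where ‖·‖_1 is the ℓ¹ norm. -/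
noncomputable section

/-!
Write `A x = Σ x_i C_i`. If `y ∈ P` and `g ∈ ker A` is supported in `supp y` with some `g_i > 0`,
then `y - t g` stays in `P` up to the first `t > 0` at which a coordinate vanishes, and there
the support has strictly shrunk. Descending this way from any `x ∈ P` along `g = x - z` for
some `z < x` in `P` reaches a minimal point below `x`. At a minimal point `y`, every such `g ≠ 0`
has entries of both signs (otherwise `y` could be lowered), so if the columns `C_i`, `i ∈ supp y`,
are dependent, `y` lies strictly between two points of `P` of smaller support, which are again
minimal; if they are independent, `y` is a vertex. Induction on the support gives (2), and shows
that the vertices are exactly the points with independent support columns.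

For (3): on the coordinate subspace of an independent support, `A` is injective, hence bounded
below; there are finitely many supports, so one constant `M` bounds `‖e‖₁ ≤ M ‖A e‖₁ = M ‖b‖₁`
on all vertices `e`. On the nonnegative orthant `‖·‖₁` is the linear functional `Σ x_i`, so the
bound passes to the convex hull of the vertices, which contains every minimal point.
-/

open Finset Function

theorem LinearMap.exists_norm_le_of_disjoint_ker {𝕜 E F : Type*} [NontriviallyNormedField 𝕜]
    [CompleteSpace 𝕜] [NormedAddCommGroup E] [NormedSpace 𝕜 E] [FiniteDimensional 𝕜 E]
    [NormedAddCommGroup F] [NormedSpace 𝕜 F] (f : E →ₗ[𝕜] F) {V : Submodule 𝕜 E}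
    (hV : Disjoint V (LinearMap.ker f)) : ∃ K : ℝ, 0 ≤ K ∧ ∀ x ∈ V, ‖x‖ ≤ K * ‖f x‖ := by
  have hker : LinearMap.ker (f.domRestrict V) = ⊥ := by
    rw [LinearMap.ker_eq_bot']
    exact fun x hx => Subtype.ext ((LinearMap.disjoint_ker.1 hV) x x.2 hx)
  obtain ⟨K, -, hK⟩ := (f.domRestrict V).exists_antilipschitzWith hker
  exact ⟨K, K.2, fun x hx => hK.le_mul_norm (map_zero _) ⟨x, hx⟩⟩

theorem support_subset_of_le {ι : Type*} {x y : ι → ℝ} (hx : 0 ≤ x) (hxy : x ≤ y) :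
    support x ⊆ support y := fun i hi hyi => hi (le_antisymm (hyi ▸ hxy i) (hx i))

section Vectors

variable {ι : Type*} [Fintype ι]

theorem Fintype.linearIndepOn_iff {R M : Type*} [Ring R] [AddCommGroup M] [Module R M]
    {v : ι → M} {s : Set ι} :
    LinearIndepOn R v s ↔
      ∀ g : ι → R, support g ⊆ s → Fintype.linearCombination R v g = 0 → g = 0 := by
  classical
  have sum_eq {g : ι → R} {t : Finset ι} (hgt : ∀ i ∉ t, g i = 0) :
      ∑ i ∈ t, g i • v i = Fintype.linearCombination R v g := by
    rw [Fintype.linearCombination_apply]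
    exact Finset.sum_subset (subset_univ t) fun i _ hi => by simp [hgt i hi]
  rw [linearIndepOn_iff'']
  refine ⟨fun h g hgs hg0 => funext fun i => ?_, fun h t g hts hgt hsum i _ => ?_⟩
  · have hgs' := support_subset_iff'.1 hgs
    by_cases hi : i ∈ s
    · exact h s.toFinset g (by simp) (fun j hj => hgs' j (by simpa using hj))
        ((sum_eq fun j hj => hgs' j (by simpa using hj)).trans hg0) i (by simpa using hi)
    · exact hgs' i hi
  · have hgt' : support g ⊆ t := support_subset_iff'.2 hgt
    exact congrFun (h g (hgt'.trans hts) ((sum_eq hgt).symm.trans hsum)) i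

theorem exists_sub_smul_nonneg_support_ssubset {y g : ι → ℝ} (hy : 0 ≤ y)
    (hgy : support g ⊆ support y) (hg : ∃ i, 0 < g i) :
    ∃ t : ℝ, 0 < t ∧ 0 ≤ y - t • g ∧ support (y - t • g) ⊂ support y := by
  classical
  obtain ⟨i₀, hi₀, hmin⟩ := (univ.filter fun i => 0 < g i).exists_min_image
    (fun i => y i / g i) (by simpa [Finset.Nonempty] using hg)
  simp only [mem_filter, mem_univ, true_and] at hi₀ hmin
  have hyi₀ : 0 < y i₀ := (hy i₀).lt_of_ne' (hgy hi₀.ne')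
  refine ⟨y i₀ / g i₀, div_pos hyi₀ hi₀, fun i => ?_, ?_⟩
  · rcases le_or_gt (g i) 0 with hgi | hgi
    · have := mul_nonpos_of_nonneg_of_nonpos (div_pos hyi₀ hi₀).le hgi
      simp only [Pi.zero_apply, Pi.sub_apply, Pi.smul_apply, smul_eq_mul]
      linarith [show 0 ≤ y i from hy i]
    · have := (le_div_iff₀ hgi).1 (hmin i hgi)
      simp only [Pi.zero_apply, Pi.sub_apply, Pi.smul_apply, smul_eq_mul]
      linarith
  · refine (Set.ssubset_iff_of_subset fun i hi => ?_).2 ⟨i₀, hyi₀.ne', ?_⟩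
    · by_contra hyi
      have hgi : g i = 0 := notMem_support.1 fun h => hyi (hgy h)
      simp [notMem_support.1 hyi, hgi] at hi
    · simp [div_mul_cancel₀ _ hi₀.ne']

variable {κ : Type*} [Fintype κ]

theorem norm_le_sum_abs (x : κ → ℝ) : ‖x‖ ≤ ∑ j, |x j| :=
  (pi_norm_le_iff_of_nonneg (sum_nonneg fun _ _ => abs_nonneg _)).2 fun j =>
    single_le_sum (f := fun j => |x j|) (fun _ _ => abs_nonneg _) (mem_univ j)

theorem exists_sum_abs_le_of_linearIndepOn {C : ι → κ → ℝ} {s : Set ι}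
    (hs : LinearIndepOn ℝ C s) : ∃ M : ℝ, 0 ≤ M ∧ ∀ x, support x ⊆ s →
      ∑ i, |x i| ≤ M * ∑ j, |Fintype.linearCombination ℝ C x j| := by
  let V : Submodule ℝ (ι → ℝ) := Submodule.pi sᶜ fun _ => ⊥
  have hV : ∀ x, x ∈ V ↔ support x ⊆ s := fun x => by
    rw [support_subset_iff']
    simp [V, Submodule.mem_pi]
  have hdisj : Disjoint V (LinearMap.ker (Fintype.linearCombination ℝ C)) :=
    LinearMap.disjoint_ker.2 fun x hx hx0 => Fintype.linearIndepOn_iff.1 hs x ((hV x).1 hx) hx0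
  obtain ⟨K, hK0, hK⟩ := LinearMap.exists_norm_le_of_disjoint_ker _ hdisj
  refine ⟨Fintype.card ι * K, by positivity, fun x hx => ?_⟩
  calc ∑ i, |x i| ≤ Fintype.card ι * ‖x‖ := by simpa using Pi.sum_norm_apply_le_norm x
    _ ≤ Fintype.card ι * (K * ‖Fintype.linearCombination ℝ C x‖) := by
      gcongr; exact hK x ((hV x).2 hx)
    _ ≤ Fintype.card ι * K * ∑ j, |Fintype.linearCombination ℝ C x j| := by
      rw [mul_assoc]; gcongr; exact norm_le_sum_abs _

theorem exists_sum_abs_le_of_linearIndepOn_support (C : ι → κ → ℝ) :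
    ∃ M : ℝ, ∀ x, LinearIndepOn ℝ C (support x) →
      ∑ i, |x i| ≤ M * ∑ j, |Fintype.linearCombination ℝ C x j| := by
  have hbound : ∀ s : Set ι, ∃ M : ℝ, 0 ≤ M ∧ (LinearIndepOn ℝ C s → ∀ x, support x ⊆ s →
      ∑ i, |x i| ≤ M * ∑ j, |Fintype.linearCombination ℝ C x j|) := fun s => by
    by_cases hs : LinearIndepOn ℝ C s
    · obtain ⟨M, hM0, hM⟩ := exists_sum_abs_le_of_linearIndepOn hs
      exact ⟨M, hM0, fun _ => hM⟩
    · exact ⟨0, le_rfl, fun h => absurd h hs⟩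
  choose M hM0 hM using hbound
  refine ⟨∑ s, M s, fun x hx => (hM _ hx x subset_rfl).trans ?_⟩
  gcongr
  exact single_le_sum (fun s _ => hM0 s) (mem_univ _)

end Vectors

section Polyhedron

variable {m n : ℕ} {C : Fin n → Fin m → ℝ} {b : Fin m → ℝ} {x y u v g : Fin n → ℝ}

theorem mem_polyP : x ∈ PolyP C b ↔ 0 ≤ x ∧ Fintype.linearCombination ℝ C x = b := by
  rw [Fintype.linearCombination_apply, Pi.le_def]
  rfl

theorem convex_polyP : Convex ℝ (PolyP C b) := by
  have : PolyP C b = Set.Ici 0 ∩ Fintype.linearCombination ℝ C ⁻¹' {b} := by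
    ext x; exact mem_polyP
  rw [this]
  exact (convex_Ici 0).inter ((convex_singleton b).linear_preimage _)

theorem sub_smul_mem_polyP (hx : x ∈ PolyP C b) (hg : Fintype.linearCombination ℝ C g = 0)
    {t : ℝ} (h : 0 ≤ x - t • g) : x - t • g ∈ PolyP C b := by
  rw [mem_polyP] at hx ⊢
  simp [h, hx.2, hg]

theorem IsMinimalPt.exists_pos_of_mem_ker (hy : IsMinimalPt C b y)
    (hg : Fintype.linearCombination ℝ C g = 0) (hgy : support g ⊆ support y) (hg0 : g ≠ 0) :
    ∃ i, 0 < g i := by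
  by_contra! hneg
  have hpos : ∃ i, 0 < (-g) i := by
    obtain ⟨i, hi⟩ := Function.ne_iff.1 hg0
    exact ⟨i, neg_pos.2 ((hneg i).lt_of_ne hi)⟩
  obtain ⟨t, ht, hnonneg, hsupp⟩ :=
    exists_sub_smul_nonneg_support_ssubset hy.1.1 (by rwa [support_neg]) hpos
  refine hy.2 ⟨y - t • -g, sub_smul_mem_polyP hy.1 (by simp [hg]) hnonneg, ?_, ?_⟩
  · exact sub_le_self _ (smul_nonneg ht.le fun i => neg_nonneg.2 (hneg i))
  · exact fun h => hsupp.ne (congrArg support h)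

theorem exists_isMinimalPt_le (hx : x ∈ PolyP C b) : ∃ y, IsMinimalPt C b y ∧ y ≤ x := by
  induction hk : (support x).ncard using Nat.strong_induction_on generalizing x with
  | _ k ih =>
  by_cases hmin : IsMinimalPt C b x
  · exact ⟨x, hmin, le_rfl⟩
  obtain ⟨z, hz, hzx, hne⟩ : ∃ z ∈ PolyP C b, z ≤ x ∧ z ≠ x := by
    simpa [IsMinimalPt, hx] using hmin
  have hzx' : 0 ≤ x - z := sub_nonneg.2 hzx
  obtain ⟨t, ht, hnonneg, hsupp⟩ := exists_sub_smul_nonneg_support_ssubset (g := x - z) hx.1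
    (support_subset_of_le hzx' (sub_le_self x hz.1))
    (by simpa using (Pi.lt_def.1 (lt_of_le_of_ne hzx hne)).2)
  have hker : Fintype.linearCombination ℝ C (x - z) = 0 := by
    simp [(mem_polyP.1 hx).2, (mem_polyP.1 hz).2]
  obtain ⟨y, hy, hyx⟩ := ih _ (hk ▸ Set.ncard_lt_ncard hsupp)
    (sub_smul_mem_polyP hx hker hnonneg) rfl
  exact ⟨y, hy, hyx.trans (sub_le_self _ (smul_nonneg ht.le hzx'))⟩

theorem IsMinimalPt.of_mem_openSegment (hy : IsMinimalPt C b y) (hu : u ∈ PolyP C b)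
    (hv : v ∈ PolyP C b) (h : y ∈ openSegment ℝ u v) : IsMinimalPt C b u := by
  refine ⟨hu, ?_⟩
  rintro ⟨u', hu', hle, hne⟩
  obtain ⟨a, c, ha, hc, hac, rfl⟩ := h
  refine hy.2 ⟨a • u' + c • v, convex_polyP hu' hv ha.le hc.le hac, ?_, fun h => hne ?_⟩
  · exact add_le_add_left (smul_le_smul_of_nonneg_left hle ha.le) _
  · exact smul_right_injective _ ha.ne' (add_right_cancel h)

theorem IsMinimalPt.exists_mem_openSegment (hy : IsMinimalPt C b y)
    (hind : ¬ LinearIndepOn ℝ C (support y)) :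
    ∃ u ∈ PolyP C b, ∃ v ∈ PolyP C b,
      support u ⊂ support y ∧ support v ⊂ support y ∧ y ∈ openSegment ℝ u v := by
  obtain ⟨g, hgy, hg, hg0⟩ : ∃ g, support g ⊆ support y ∧
      Fintype.linearCombination ℝ C g = 0 ∧ g ≠ 0 := by
    simpa [Fintype.linearIndepOn_iff] using hind
  have hneg : Fintype.linearCombination ℝ C (-g) = 0 := by simp [hg]
  obtain ⟨t, ht, htnonneg, htsupp⟩ := exists_sub_smul_nonneg_support_ssubset hy.1.1 hgy
    (hy.exists_pos_of_mem_ker hg hgy hg0)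
  obtain ⟨s, hs, hsnonneg, hssupp⟩ := exists_sub_smul_nonneg_support_ssubset hy.1.1
    (by rwa [support_neg])
    (hy.exists_pos_of_mem_ker hneg (by rwa [support_neg]) (neg_ne_zero.2 hg0))
  refine ⟨_, sub_smul_mem_polyP hy.1 hg htnonneg, _, sub_smul_mem_polyP hy.1 hneg hsnonneg,
    htsupp, hssupp, s / (t + s), t / (t + s), by positivity, by positivity,
    by rw [← add_div, add_comm, div_self (by positivity)], ?_⟩
  ext i
  simp only [Pi.add_apply, Pi.smul_apply, Pi.sub_apply, Pi.neg_apply, smul_eq_mul]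
  field_simp
  ring

theorem mem_extremePoints_polyP_of_linearIndepOn (hy : y ∈ PolyP C b)
    (hind : LinearIndepOn ℝ C (support y)) : y ∈ (PolyP C b).extremePoints ℝ := by
  refine mem_extremePoints_iff_left.2 ⟨hy, fun x₁ hx₁ x₂ hx₂ hseg => ?_⟩
  obtain ⟨a, c, ha, hc, -, rfl⟩ := hseg
  have hsupp : support x₁ ⊆ support (a • x₁ + c • x₂) := by
    rw [← support_const_smul_of_ne_zero a x₁ ha.ne']
    exact support_subset_of_le (smul_nonneg ha.le hx₁.1)
      (le_add_of_nonneg_right (smul_nonneg hc.le hx₂.1))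
  have hker : Fintype.linearCombination ℝ C (x₁ - (a • x₁ + c • x₂)) = 0 := by
    rw [map_sub, (mem_polyP.1 hx₁).2, (mem_polyP.1 hy).2, sub_self]
  refine sub_eq_zero.1 (Fintype.linearIndepOn_iff.1 hind _ ?_ hker)
  exact (support_sub _ _).trans (Set.union_subset hsupp subset_rfl)

theorem isMinimalPt_of_mem_extremePoints (he : y ∈ (PolyP C b).extremePoints ℝ) :
    IsMinimalPt C b y := by
  refine ⟨he.1, fun ⟨z, hz, hzy, hne⟩ => hne ?_⟩
  have hw : y + (y - z) ∈ PolyP C b := by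
    rw [mem_polyP] at hz ⊢
    refine ⟨add_nonneg he.1.1 (sub_nonneg.2 hzy), ?_⟩
    simp [(mem_polyP.1 he.1).2, hz.2]
  refine (mem_extremePoints_iff_left.1 he).2 z hz _ hw
    ⟨1 / 2, 1 / 2, by norm_num, by norm_num, by norm_num, ?_⟩
  ext i
  simp only [Pi.add_apply, Pi.smul_apply, Pi.sub_apply, smul_eq_mul]
  ring

theorem linearIndepOn_support_of_mem_extremePoints (he : y ∈ (PolyP C b).extremePoints ℝ) :
    LinearIndepOn ℝ C (support y) := by
  by_contra hind
  obtain ⟨u, hu, v, hv, hsupp, -, hseg⟩ :=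
    (isMinimalPt_of_mem_extremePoints he).exists_mem_openSegment hind
  exact hsupp.ne (congrArg support (mem_extremePoints_iff_left.1 he |>.2 u hu v hv hseg))

theorem IsMinimalPt.mem_convexHull_extremePoints (hy : IsMinimalPt C b y) :
    y ∈ convexHull ℝ ((PolyP C b).extremePoints ℝ) := by
  induction hk : (support y).ncard using Nat.strong_induction_on generalizing y with
  | _ k ih =>
  by_cases hind : LinearIndepOn ℝ C (support y)
  · exact subset_convexHull ℝ _ (mem_extremePoints_polyP_of_linearIndepOn hy.1 hind)
  obtain ⟨u, hu, v, hv, husupp, hvsupp, hseg⟩ := hy.exists_mem_openSegment hind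
  refine (convex_convexHull ℝ _).openSegment_subset ?_ ?_ hseg
  · exact ih _ (hk ▸ Set.ncard_lt_ncard husupp) (hy.of_mem_openSegment hu hv hseg) rfl
  · exact ih _ (hk ▸ Set.ncard_lt_ncard hvsupp)
      (hy.of_mem_openSegment hv hu (openSegment_symm ℝ u v ▸ hseg)) rfl

end Polyhedron

theorem exists_sum_abs_le_of_isMinimalPt {m n : ℕ} (C : Fin n → Fin m → ℝ) :
    ∃ M : ℝ, ∀ b y, IsMinimalPt C b y → ∑ i, |y i| ≤ M * ∑ j, |b j| := by
  obtain ⟨M, hM⟩ := exists_sum_abs_le_of_linearIndepOn_support C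
  refine ⟨M, fun b y hy => ?_⟩
  have sum_abs_eq {x : Fin n → ℝ} (hx : 0 ≤ x) : ∑ i, |x i| = ∑ i, x i :=
    sum_congr rfl fun i _ => abs_of_nonneg (hx i)
  let S : Set (Fin n → ℝ) := {x | ∑ i, x i ≤ M * ∑ j, |b j|}
  have hS : Convex ℝ S := convex_halfSpace_le
    ⟨fun x z => by simp [sum_add_distrib], fun c x => by simp [mul_sum]⟩ _
  have hext : (PolyP C b).extremePoints ℝ ⊆ S := fun e he => by
    have heP := mem_polyP.1 he.1
    have := hM e (linearIndepOn_support_of_mem_extremePoints he)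
    rwa [heP.2, sum_abs_eq heP.1] at this
  rw [sum_abs_eq hy.1.1]
  exact convexHull_min hext hS hy.mem_convexHull_extremePoints

theorem stmt18_general (m n : ℕ) (C : Fin n → Fin m → ℝ) (b : Fin m → ℝ) :
    (∀ x ∈ PolyP C b, ∃ y, IsMinimalPt C b y ∧ y ≤ x) ∧
    (∀ y, IsMinimalPt C b y → y ∈ convexHull ℝ (Set.extremePoints ℝ (PolyP C b))) ∧
    (∃ M : ℝ, ∀ b' : Fin m → ℝ, (PolyP C b').Nonempty →
      ∀ y, IsMinimalPt C b' y → ∑ i, |y i| ≤ M * ∑ j, |b' j|) := by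
  obtain ⟨M, hM⟩ := exists_sum_abs_le_of_isMinimalPt C
  exact ⟨fun _ => exists_isMinimalPt_le, fun _ => IsMinimalPt.mem_convexHull_extremePoints,
    M, fun b' _ => hM b'⟩

/-- If `P ≠ ∅` then: (1) below every `x ∈ P` there is a minimal point of `P`;
(2) every minimal point of `P` is a convex combination of extreme points of `P`;
(3) there is `M`, depending only on `C`, such that for every `b'` with nonempty
polyhedron, every minimal point `y` satisfies `‖y‖₁ ≤ M ‖b'‖₁`. -/
theorem stmt18 (m n : ℕ) (hm : 1 ≤ m) (hmn : m ≤ n)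
    (C : Fin n → Fin m → ℝ) (b : Fin m → ℝ) (hP : (PolyP C b).Nonempty) :
    (∀ x ∈ PolyP C b, ∃ y, IsMinimalPt C b y ∧ y ≤ x) ∧
    (∀ y, IsMinimalPt C b y → y ∈ convexHull ℝ (Set.extremePoints ℝ (PolyP C b))) ∧
    (∃ M : ℝ, ∀ b' : Fin m → ℝ, (PolyP C b').Nonempty →
      ∀ y, IsMinimalPt C b' y → ∑ i, |y i| ≤ M * ∑ j, |b' j|) :=
  stmt18_general m n C b
end
end

section
/- Let L : ℝ^n → ℝ^n be a linear map and φ : ℝ^n → ℝ a linear form. There exists a constant M, depending only on L and φ, such that for all b ∈ ℝ^n and c ∈ ℝ for which P = {x ∈ ℝ^n : x_i ≥ 0 for all i, L(x) = b, φ(x) ≥ c} is nonempty, and for every x ∈ P, there exists y ∈ P with y ≤ x coordinatewise and ‖y‖ ≤ M(‖b‖ + |c|). -/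
/-!
Write `P(b, r) = {x | L x = b ∧ ∀ k, r k ≤ ℓ k x}` for finitely many forms `ℓ k`; its recession
cone is `P(0, 0)`. If the constraints tight at `x` (together with `L`) cut out only `0`, then `x` is
recovered from `L x` and the tight right-hand sides by an injective linear map, one of finitely
many, so `‖x‖ ≤ C (‖b‖ + ‖r‖)`. Otherwise pick a nonzero direction `d` in the tight subspace and
move along it until a new constraint becomes tight, so that the tight subspace shrinks. As the
recession cone is pointed, this is possible in at least one direction: in both, `x` is a convex
combination of two points with smaller tight subspace; in one only, `x` is such a point plus a
recession direction. By induction, `P(b, r) ⊆ {v ∈ P(b, r) | ‖v‖ ≤ C (‖b‖ + ‖r‖)} + P(0, 0)`.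
For `PolyLφ` the recession cone lies in the nonnegative orthant, which gives `y ≤ x`.
-/

noncomputable section

/-- The polyhedron `P = {x ∈ ℝ₊^n : L(x) = b, φ(x) ≥ c}`. -/
def PolyLφ {n : ℕ} (L : (Fin n → ℝ) →ₗ[ℝ] (Fin n → ℝ)) (φ : (Fin n → ℝ) →ₗ[ℝ] ℝ)
    (b : Fin n → ℝ) (c : ℝ) : Set (Fin n → ℝ) :=
  {x | (∀ i, 0 ≤ x i) ∧ L x = b ∧ c ≤ φ x}

open Filter Set
open scoped Pointwise

lemma exists_pos_min_ratio {κ : Type*} [Finite κ] (a s : κ → ℝ) (ha : ∀ k, 0 ≤ a k)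
    (has : ∀ k, a k = 0 → s k = 0) (hs : ∃ k, s k < 0) :
    ∃ t > 0, (∀ k, 0 ≤ a k + t * s k) ∧ ∃ k, s k ≠ 0 ∧ a k + t * s k = 0 := by
  obtain ⟨k₀, hk₀, hmin⟩ :=
    exists_min_image {k | s k < 0} (fun k => a k / -s k) (toFinite _) hs
  have hsk₀ : 0 < -s k₀ := neg_pos.2 hk₀
  have hak₀ : 0 < a k₀ := (ha k₀).lt_of_ne fun h => hk₀.ne (has k₀ h.symm)
  refine ⟨a k₀ / -s k₀, div_pos hak₀ hsk₀, fun k => ?_, k₀, hk₀.ne,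
    by rw [div_neg, neg_mul, div_mul_cancel₀ _ hk₀.ne, add_neg_cancel]⟩
  rcases lt_or_ge (s k) 0 with hk | hk
  · have := hmin k hk
    rw [le_div_iff₀ (neg_pos.2 hk), mul_neg] at this
    linarith
  · exact add_nonneg (ha k) (mul_nonneg (div_pos hak₀ hsk₀).le hk)

lemma pi_norm_le_sum_norm_apply {ι : Type*} [Fintype ι] {E : ι → Type*}
    [∀ i, SeminormedAddGroup (E i)] (f : ∀ i, E i) : ‖f‖ ≤ ∑ i, ‖f i‖ :=
  (pi_norm_le_iff_of_nonneg (by positivity)).2 fun i =>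
    Finset.single_le_sum (fun j _ => norm_nonneg (f j)) (Finset.mem_univ i)

section Algebraic

variable {V W κ : Type*} [AddCommGroup V] [Module ℝ V] [AddCommGroup W] [Module ℝ W]
  (L : V →ₗ[ℝ] W) (ℓ : κ → V →ₗ[ℝ] ℝ)

def polyhedron (b : W) (r : κ → ℝ) : Set V :=
  {x | L x = b ∧ ∀ k, r k ≤ ℓ k x}

variable {L ℓ} in
lemma convex_polyhedron {b : W} {r : κ → ℝ} : Convex ℝ (polyhedron L ℓ b r) := by
  intro x hx y hy s t hs ht hst
  refine ⟨by rw [map_add, map_smul, map_smul, hx.1, hy.1, ← add_smul, hst, one_smul], fun k => ?_⟩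
  have hr : r k = s * r k + t * r k := by rw [← add_mul, hst, one_mul]
  simp only [map_add, map_smul, smul_eq_mul]
  linarith [mul_le_mul_of_nonneg_left (hx.2 k) hs, mul_le_mul_of_nonneg_left (hy.2 k) ht]

lemma polyhedron_add_polyhedron_zero_subset (b : W) (r : κ → ℝ) :
    polyhedron L ℓ b r + polyhedron L ℓ 0 0 ⊆ polyhedron L ℓ b r := by
  rintro _ ⟨x, hx, d, hd, rfl⟩
  refine ⟨by rw [map_add, hx.1, hd.1, add_zero], fun k => ?_⟩
  have hdk : 0 ≤ ℓ k d := hd.2 k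
  rw [map_add]
  linarith [hx.2 k]

lemma smul_mem_polyhedron_zero {t : ℝ} (ht : 0 ≤ t) {d : V} (hd : d ∈ polyhedron L ℓ 0 0) :
    t • d ∈ polyhedron L ℓ 0 0 :=
  ⟨by rw [map_smul, hd.1, smul_zero], fun k => by
    rw [map_smul, smul_eq_mul]; exact mul_nonneg ht (hd.2 k)⟩

lemma zero_mem_polyhedron_zero : (0 : V) ∈ polyhedron L ℓ 0 0 :=
  ⟨map_zero L, fun k => (map_zero (ℓ k)).ge⟩

def constraintMap (S : Set κ) : V →ₗ[ℝ] W × (S → ℝ) :=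
  L.prod (LinearMap.pi fun k : S => ℓ k)

lemma mem_ker_constraintMap {S : Set κ} {d : V} :
    d ∈ LinearMap.ker (constraintMap L ℓ S) ↔ L d = 0 ∧ ∀ k ∈ S, ℓ k d = 0 := by
  simp [constraintMap, funext_iff]

lemma ker_constraintMap_anti {S T : Set κ} (h : S ⊆ T) :
    LinearMap.ker (constraintMap L ℓ T) ≤ LinearMap.ker (constraintMap L ℓ S) := fun _ hd => by
  rw [mem_ker_constraintMap] at hd ⊢
  exact ⟨hd.1, fun k hk => hd.2 k (h hk)⟩

def tightSubspace (r : κ → ℝ) (x : V) : Submodule ℝ V :=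
  LinearMap.ker (constraintMap L ℓ {k | ℓ k x = r k})

lemma exists_pos_add_smul_mem_polyhedron_tightSubspace_lt [Finite κ] {b : W} {r : κ → ℝ} {x e : V}
    (hx : x ∈ polyhedron L ℓ b r) (he : e ∈ tightSubspace L ℓ r x)
    (he' : e ∉ polyhedron L ℓ 0 0) :
    ∃ t : ℝ, 0 < t ∧ x + t • e ∈ polyhedron L ℓ b r ∧
      tightSubspace L ℓ r (x + t • e) < tightSubspace L ℓ r x := by
  rw [tightSubspace, mem_ker_constraintMap] at he
  have hneg : ∃ k, ℓ k e < 0 := by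
    by_contra! h
    exact he' ⟨he.1, h⟩
  obtain ⟨t, ht, hfeas, k₀, hk₀, htight⟩ := exists_pos_min_ratio (fun k => ℓ k x - r k)
    (fun k => ℓ k e) (fun k => sub_nonneg.2 (hx.2 k)) (fun k hk => he.2 k (sub_eq_zero.1 hk))
    hneg
  have hslack : ∀ k, ℓ k (x + t • e) - r k = ℓ k x - r k + t * ℓ k e := fun k => by
    rw [map_add, map_smul, smul_eq_mul]; ring
  refine ⟨t, ht, ⟨by rw [map_add, map_smul, hx.1, he.1, smul_zero, add_zero],
    fun k => sub_nonneg.1 ((hslack k).symm ▸ hfeas k)⟩, ?_⟩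
  refine lt_of_le_of_ne (ker_constraintMap_anti L ℓ fun k hk => ?_) fun h => ?_
  · rw [mem_ofPred_eq, ← sub_eq_zero, hslack, sub_eq_zero.2 hk, he.2 k hk, mul_zero, add_zero]
  · have : e ∈ tightSubspace L ℓ r (x + t • e) := by
      rw [h, tightSubspace, mem_ker_constraintMap]; exact he
    exact hk₀ ((mem_ker_constraintMap L ℓ).1 this |>.2 k₀ (sub_eq_zero.1 (hslack k₀ ▸ htight)))

end Algebraic

section Normed

open scoped Classical

variable {V W κ : Type*} [NormedAddCommGroup V] [NormedSpace ℝ V] [FiniteDimensional ℝ V]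
  [NormedAddCommGroup W] [NormedSpace ℝ W] [Fintype κ]
  (L : V →ₗ[ℝ] W) (ℓ : κ → V →ₗ[ℝ] ℝ)

omit [FiniteDimensional ℝ V] in
lemma norm_constraintMap_le (r : κ → ℝ) (x : V) :
    ‖constraintMap L ℓ {k | ℓ k x = r k} x‖ ≤ ‖L x‖ + ‖r‖ := by
  rw [Prod.norm_def]
  refine max_le (le_add_of_nonneg_right (norm_nonneg r)) (le_add_of_nonneg_left (norm_nonneg _)
    |>.trans' ((pi_norm_le_iff_of_nonneg (norm_nonneg r)).2 ?_))
  rintro ⟨k, hk⟩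
  change ‖ℓ k x‖ ≤ ‖r‖
  exact hk.symm ▸ norm_le_pi_norm r k

lemma exists_norm_le_of_tightSubspace_eq_bot :
    ∃ C, 0 ≤ C ∧ ∀ (r : κ → ℝ) (x : V), tightSubspace L ℓ r x = ⊥ → ‖x‖ ≤ C * (‖L x‖ + ‖r‖) := by
  have hS : ∀ S : Set κ, ∀ᶠ C in atTop, LinearMap.ker (constraintMap L ℓ S) = ⊥ →
      ∀ x, ‖x‖ ≤ C * ‖constraintMap L ℓ S x‖ := by
    intro S
    by_cases h : LinearMap.ker (constraintMap L ℓ S) = ⊥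
    · obtain ⟨K, -, hK⟩ := (constraintMap L ℓ S).exists_antilipschitzWith h
      filter_upwards [eventually_ge_atTop (K : ℝ)] with C hC _ x
      exact (ZeroHomClass.bound_of_antilipschitz _ hK x).trans (by gcongr)
    · exact .of_forall fun _ h' => absurd h' h
  obtain ⟨C, hC₀, hC⟩ := ((eventually_ge_atTop 0).and (eventually_all.2 hS)).exists
  exact ⟨C, hC₀, fun r x hx => (hC _ hx x).trans (by gcongr; exact norm_constraintMap_le L ℓ r x)⟩

variable {L ℓ} in
theorem polyhedron_subset_bounded_add_recession
    (hpointed : ∀ d ∈ polyhedron L ℓ 0 0, -d ∈ polyhedron L ℓ 0 0 → d = 0) :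
    ∃ C, 0 ≤ C ∧ ∀ (b : W) (r : κ → ℝ), polyhedron L ℓ b r ⊆
      {v ∈ polyhedron L ℓ b r | ‖v‖ ≤ C * (‖b‖ + ‖r‖)} + polyhedron L ℓ 0 0 := by
  obtain ⟨C, hC₀, hC⟩ := exists_norm_le_of_tightSubspace_eq_bot L ℓ
  refine ⟨C, hC₀, fun b r x hx => ?_⟩
  set R := polyhedron L ℓ 0 0
  set X := {v ∈ polyhedron L ℓ b r | ‖v‖ ≤ C * (‖b‖ + ‖r‖)} + R
  have hX : Convex ℝ X :=
    ((convexOn_norm convex_polyhedron).convex_le _).add convex_polyhedron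
  have hXR : X + R ⊆ X := by
    rw [add_assoc]
    exact add_subset_add_left (polyhedron_add_polyhedron_zero_subset L ℓ 0 0)
  induction x using (InvImage.wf (tightSubspace L ℓ r) wellFounded_lt).induction with
  | _ x ih => ?_
  by_cases hT : tightSubspace L ℓ r x = ⊥
  · exact subset_add_left _ (zero_mem_polyhedron_zero L ℓ) ⟨hx, hx.1 ▸ hC r x hT⟩
  have advance : ∀ e ∈ tightSubspace L ℓ r x, e ∉ R → ∃ t : ℝ, 0 < t ∧ x + t • e ∈ X := by
    intro e he heR
    obtain ⟨t, ht, hxt, hlt⟩ := exists_pos_add_smul_mem_polyhedron_tightSubspace_lt L ℓ hx he heR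
    exact ⟨t, ht, ih _ hlt hxt⟩
  obtain ⟨d, hd, hd₀⟩ := Submodule.exists_mem_ne_zero_of_ne_bot hT
  obtain ⟨e, he, heR⟩ : ∃ e ∈ tightSubspace L ℓ r x, e ∉ R := by
    by_cases hdR : d ∈ R
    · exact ⟨-d, neg_mem hd, fun h => hd₀ (hpointed d hdR h)⟩
    · exact ⟨d, hd, hdR⟩
  obtain ⟨t, ht, hxt⟩ := advance e he heR
  by_cases hneR : -e ∈ R
  · have hx_eq : x = (x + t • e) + t • -e := by module
    rw [hx_eq]
    exact hXR (add_mem_add hxt (smul_mem_polyhedron_zero L ℓ ht.le hneR))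
  · obtain ⟨s, hs, hxs⟩ := advance (-e) (neg_mem he) hneR
    have hx_eq : x = (s / (t + s)) • (x + t • e) + (t / (t + s)) • (x + s • -e) := by
      match_scalars <;> field_simp <;> ring
    rw [hx_eq]
    exact hX hxt hxs (by positivity) (by positivity) (by field_simp; ring)

end Normed

namespace PolyLφ

variable {n : ℕ}

def constraint (φ : (Fin n → ℝ) →ₗ[ℝ] ℝ) : Option (Fin n) → (Fin n → ℝ) →ₗ[ℝ] ℝ
  | none => φ
  | some i => LinearMap.proj i

def rhs (c : ℝ) : Option (Fin n) → ℝ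
  | none => c
  | some _ => 0

variable (L : (Fin n → ℝ) →ₗ[ℝ] (Fin n → ℝ)) (φ : (Fin n → ℝ) →ₗ[ℝ] ℝ)

lemma eq_polyhedron (b : Fin n → ℝ) (c : ℝ) :
    PolyLφ L φ b c = polyhedron L (constraint φ) b (rhs c) := by
  ext x
  simp only [PolyLφ, polyhedron, Option.forall, constraint, rhs, LinearMap.proj_apply,
    mem_ofPred_eq]
  tauto

lemma recession_pointed :
    ∀ d ∈ polyhedron L (constraint φ) 0 0, -d ∈ polyhedron L (constraint φ) 0 0 → d = 0 :=
  fun _ hd hd' => funext fun i => le_antisymm (neg_nonneg.1 (hd'.2 (some i))) (hd.2 (some i))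

lemma norm_rhs_le (c : ℝ) : ‖(rhs c : Option (Fin n) → ℝ)‖ ≤ |c| := by
  refine (pi_norm_le_iff_of_nonneg (abs_nonneg c)).2 fun k => ?_
  cases k <;> simp [rhs]

end PolyLφ

theorem stmt19_general (n : ℕ)
    (L : (Fin n → ℝ) →ₗ[ℝ] (Fin n → ℝ)) (φ : (Fin n → ℝ) →ₗ[ℝ] ℝ) :
    ∃ M : ℝ, ∀ (b : Fin n → ℝ) (c : ℝ), (PolyLφ L φ b c).Nonempty →
      ∀ x ∈ PolyLφ L φ b c, ∃ y ∈ PolyLφ L φ b c, y ≤ x ∧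
        ∑ i, |y i| ≤ M * (∑ i, |b i| + |c|) := by
  obtain ⟨C, hC₀, hC⟩ := polyhedron_subset_bounded_add_recession (PolyLφ.recession_pointed L φ)
  refine ⟨n * C, fun b c _ x hx => ?_⟩
  rw [PolyLφ.eq_polyhedron] at hx ⊢
  obtain ⟨y, ⟨hy, hy_norm⟩, d, hd, rfl⟩ := hC b (PolyLφ.rhs c) hx
  refine ⟨y, hy, fun i => le_add_of_nonneg_right (hd.2 (some i)), ?_⟩
  have hb : ‖b‖ ≤ ∑ i, |b i| := by simpa using pi_norm_le_sum_norm_apply b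
  calc ∑ i, |y i| ≤ n * ‖y‖ := by simpa using Pi.sum_norm_apply_le_norm y
    _ ≤ n * (C * (‖b‖ + ‖(PolyLφ.rhs c : Option (Fin n) → ℝ)‖)) := by gcongr
    _ ≤ n * C * (∑ i, |b i| + |c|) := by
      rw [mul_assoc]; gcongr; exact PolyLφ.norm_rhs_le c

/-- There is a constant `M`, depending only on `L` and `φ`, such that for all `b, c` with
`P = {x ≥ 0 : L(x) = b, φ(x) ≥ c}` nonempty and every `x ∈ P`, there is `y ∈ P` with
`y ≤ x` coordinatewise and `‖y‖₁ ≤ M(‖b‖₁ + |c|)`. -/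
theorem stmt19 (n : ℕ) (hn : 1 ≤ n)
    (L : (Fin n → ℝ) →ₗ[ℝ] (Fin n → ℝ)) (φ : (Fin n → ℝ) →ₗ[ℝ] ℝ) :
    ∃ M : ℝ, ∀ (b : Fin n → ℝ) (c : ℝ), (PolyLφ L φ b c).Nonempty →
      ∀ x ∈ PolyLφ L φ b c, ∃ y ∈ PolyLφ L φ b c, y ≤ x ∧
        ∑ i, |y i| ≤ M * (∑ i, |b i| + |c|) :=
  stmt19_general n L φ
end
end
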